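/- arXiv:2508.00014 — 9 statements merged into one kernel-verified Lean document; each statement's English description precedes it below -/
import Mathlib

section
/- Let A, B, A', B' be nonempty sets, let F : A × B → ℝ and G : A' × B' → ℝ be bounded functions, and let M ≥ 0. Suppose there are maps α : A → A' and β : B' → B such that |F(a, β(b')) − G(α(a), b')| ≤ M for all a ∈ A and b' ∈ B', and maps α' : A' → A and β' : B → B' such that |F(α'(a'), b) − G(a', β'(b))| ≤ M for all a' ∈ A' and b ∈ B. If both F and G are determined, then |inf_{a ∈ A} sup_{b ∈ B} F(a, b) − inf_{a' ∈ A'} sup_{b' ∈ B'} G(a', b')| ≤ M. (This is the abstract content of the paper's bisimulation lemma: two games whose strategies simulate each other with plays of weight differing by at most M have values differing by at most M.) -/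
/-- Abstract bisimulation lemma: two determined games whose strategies simulate
each other with plays of weight differing by at most `M` have values differing
by at most `M`. -/
theorem value_diff_le_of_mutual_simulation
    {A B A' B' : Type*} [Nonempty A] [Nonempty B] [Nonempty A'] [Nonempty B']
    (F : A × B → ℝ) (G : A' × B' → ℝ)
    (hFbdd : ∃ C : ℝ, ∀ p, |F p| ≤ C) (hGbdd : ∃ C : ℝ, ∀ p, |G p| ≤ C)
    (M : ℝ) (hM : 0 ≤ M)
    (α : A → A') (β : B' → B)
    (h1 : ∀ (a : A) (b' : B'), |F (a, β b') - G (α a, b')| ≤ M)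
    (α' : A' → A) (β' : B → B')
    (h2 : ∀ (a' : A') (b : B), |F (α' a', b) - G (a', β' b)| ≤ M)
    (hFdet : (⨅ a : A, ⨆ b : B, F (a, b)) = ⨆ b : B, ⨅ a : A, F (a, b))
    (hGdet : (⨅ a' : A', ⨆ b' : B', G (a', b')) = ⨆ b' : B', ⨅ a' : A', G (a', b')) :
    |(⨅ a : A, ⨆ b : B, F (a, b)) - ⨅ a' : A', ⨆ b' : B', G (a', b')| ≤ M := by
  obtain ⟨C, hC⟩ := hFbdd
  obtain ⟨D, hD⟩ := hGbdd
  have hFub : ∀ p, F p ≤ C := fun p => (abs_le.1 (hC p)).2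
  have hFlb : ∀ p, -C ≤ F p := fun p => (abs_le.1 (hC p)).1
  have hGub : ∀ p, G p ≤ D := fun p => (abs_le.1 (hD p)).2
  have hGlb : ∀ p, -D ≤ G p := fun p => (abs_le.1 (hD p)).1
  -- bddness facts
  have hFsupA : ∀ a : A, BddAbove (Set.range fun b => F (a, b)) :=
    fun a => ⟨C, by rintro _ ⟨b, rfl⟩; exact hFub _⟩
  have hGsupA : ∀ a' : A', BddAbove (Set.range fun b' => G (a', b')) :=
    fun a' => ⟨D, by rintro _ ⟨b', rfl⟩; exact hGub _⟩
  have hFinfB : ∀ b : B, BddBelow (Set.range fun a => F (a, b)) :=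
    fun b => ⟨-C, by rintro _ ⟨a, rfl⟩; exact hFlb _⟩
  have hGinfB : ∀ b' : B', BddBelow (Set.range fun a' => G (a', b')) :=
    fun b' => ⟨-D, by rintro _ ⟨a', rfl⟩; exact hGlb _⟩
  have hFoutInf : BddBelow (Set.range fun a : A => ⨆ b : B, F (a, b)) := by
    refine ⟨-C, ?_⟩
    rintro _ ⟨a, rfl⟩
    exact le_trans (hFlb (a, Classical.arbitrary B)) (le_ciSup (hFsupA a) _)
  have hFoutSup : BddAbove (Set.range fun b : B => ⨅ a : A, F (a, b)) := by
    refine ⟨C, ?_⟩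
    rintro _ ⟨b, rfl⟩
    exact le_trans (ciInf_le (hFinfB b) (Classical.arbitrary A)) (hFub _)
  -- Step 1: valF ≤ valG + M
  have step1 : (⨅ a : A, ⨆ b : B, F (a, b)) - M ≤ ⨅ a' : A', ⨆ b' : B', G (a', b') := by
    refine le_ciInf fun a' => ?_
    have h : (⨆ b : B, F (α' a', b)) ≤ (⨆ b' : B', G (a', b')) + M := by
      refine ciSup_le fun b => ?_
      have := (abs_le.1 (h2 a' b)).2
      have hle : F (α' a', b) ≤ G (a', β' b) + M := by linarith
      exact hle.trans (add_le_add_left (le_ciSup (hGsupA a') (β' b)) M)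
    have h0 : (⨅ a : A, ⨆ b : B, F (a, b)) ≤ ⨆ b : B, F (α' a', b) :=
      ciInf_le hFoutInf (α' a')
    linarith
  -- Step 2: valG ≤ valF + M (via lower values)
  have step2 : (⨅ a' : A', ⨆ b' : B', G (a', b')) - M ≤ ⨅ a : A, ⨆ b : B, F (a, b) := by
    rw [hFdet, hGdet]
    rw [sub_le_iff_le_add]
    refine ciSup_le fun b' => ?_
    have h : (⨅ a' : A', G (a', b')) ≤ (⨅ a : A, F (a, β b')) + M := by
      rw [← sub_le_iff_le_add]
      refine le_ciInf fun a => ?_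
      have := (abs_le.1 (h1 a b')).1
      have h0 : (⨅ a' : A', G (a', b')) ≤ G (α a, b') := ciInf_le (hGinfB b') (α a)
      linarith
    refine h.trans (add_le_add_left ?_ M)
    exact le_ciSup hFoutSup (β b')
  rw [abs_sub_le_iff]
  constructor <;> linarith
end

section
/- Let A, B, A', B' be nonempty sets, let F : A × B → ℝ and G : A' × B' → ℝ be bounded functions, and let M ≥ 0. Suppose there are maps α : A → A' and β : B' → B such that G(α(a), b') ≤ F(a, β(b')) + M for all a ∈ A and b' ∈ B'. If G is determined, then inf_{a' ∈ A'} sup_{b' ∈ B'} G(a', b') ≤ inf_{a ∈ A} sup_{b ∈ B} F(a, b) + M. (This is the one-sided inequality established in the proof of the paper's bisimulation lemma, using that a simulation turns each strategy of the minimizer in one game into a strategy of the minimizer in the other, and each strategy of the maximizer conversely.) -/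
/-- One-sided inequality from the bisimulation lemma: if a simulation turns each
strategy of the minimizer of `F` into one of `G` and each strategy of the
maximizer of `G` into one of `F`, with weights within `M`, and `G` is
determined, then the value of `G` is at most the value of `F` plus `M`. -/
theorem value_le_of_simulation
    {A B A' B' : Type*} [Nonempty A] [Nonempty B] [Nonempty A'] [Nonempty B']
    (F : A × B → ℝ) (G : A' × B' → ℝ)
    (hFbdd : ∃ C : ℝ, ∀ p, |F p| ≤ C) (hGbdd : ∃ C : ℝ, ∀ p, |G p| ≤ C)
    (M : ℝ) (hM : 0 ≤ M)
    (α : A → A') (β : B' → B)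
    (h1 : ∀ (a : A) (b' : B'), G (α a, b') ≤ F (a, β b') + M)
    (hGdet : (⨅ a' : A', ⨆ b' : B', G (a', b')) = ⨆ b' : B', ⨅ a' : A', G (a', b')) :
    (⨅ a' : A', ⨆ b' : B', G (a', b')) ≤ (⨅ a : A, ⨆ b : B, F (a, b)) + M := by
  obtain ⟨CF, hCF⟩ := hFbdd
  obtain ⟨CG, hCG⟩ := hGbdd
  rw [hGdet, ← sub_le_iff_le_add]
  apply le_ciInf
  intro a
  rw [sub_le_iff_le_add]
  apply ciSup_le
  intro b'
  have h2 : (⨅ a' : A', G (a', b')) ≤ G (α a, b') := by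
    apply ciInf_le
    exact ⟨-CG, by rintro _ ⟨a', rfl⟩; linarith [abs_le.mp (hCG (a', b'))]⟩
  have h3 : F (a, β b') ≤ ⨆ b : B, F (a, b) := by
    apply le_ciSup (f := fun b => F (a, b))
    exact ⟨CF, by rintro _ ⟨b, rfl⟩; linarith [abs_le.mp (hCF (a, b))]⟩
  linarith [h1 a b']
end

section
/- Let F be a finite set of affine functions ℝ → ℝ. Then the set of all functions g : [0,1] → ℝ that are piecewise in F is finite. (This is the key finiteness claim in the termination proof of the value iteration algorithm for two-clock kernel weighted timed games: since any two distinct affine functions agree in at most one point, a continuous function assembled from pieces in F can only change its active piece at one of the finitely many crossing points of pairs of members of F, so only finitely many such functions exist.) -/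
/-- A function `ℝ → ℝ` is affine if it has the form `t ↦ a * t + b`. -/
def Affine (φ : ℝ → ℝ) : Prop := ∃ a b : ℝ, ∀ t : ℝ, φ t = a * t + b

/-- A function `g` on the closed unit interval is piecewise in a family `F` of
functions `ℝ → ℝ` if there are finitely many points
`0 = t₀ ≤ t₁ ≤ … ≤ t_n = 1` such that on each `[t_{i-1}, t_i]`, `g` agrees
with some member of `F`. -/
def PiecewiseIn (F : Set (ℝ → ℝ)) (g : Set.Icc (0:ℝ) 1 → ℝ) : Prop :=
  ∃ n : ℕ, ∃ t : Fin (n + 1) → ℝ, Monotone t ∧ t 0 = 0 ∧ t (Fin.last n) = 1 ∧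
    ∀ i : Fin n, ∃ φ ∈ F, ∀ s : Set.Icc (0:ℝ) 1,
      t i.castSucc ≤ (s : ℝ) → (s : ℝ) ≤ t i.succ → g s = φ (s : ℝ)

/-- Two affine functions agreeing at two distinct points are equal. -/
lemma affine_eq_of_agree {φ ψ : ℝ → ℝ} (hφ : Affine φ) (hψ : Affine ψ)
    {x y : ℝ} (hxy : x ≠ y) (hx : φ x = ψ x) (hy : φ y = ψ y) : φ = ψ := by
  obtain ⟨a, b, ha⟩ := hφ
  obtain ⟨a', b', ha'⟩ := hψ
  have e1 : a * x + b = a' * x + b' := by rw [← ha, ← ha', hx]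
  have e2 : a * y + b = a' * y + b' := by rw [← ha, ← ha', hy]
  have haa : (a - a') * (x - y) = 0 := by linear_combination e1 - e2
  have hxy' : x - y ≠ 0 := sub_ne_zero.mpr hxy
  have haa' : a = a' := by
    rcases mul_eq_zero.mp haa with h | h
    · linarith [sub_eq_zero.mp h]
    · exact absurd h hxy'
  have hbb : b = b' := by rw [haa'] at e1; linarith
  funext t
  rw [ha, ha', haa', hbb]

set_option maxHeartbeats 2000000 in
/-- There are only finitely many functions on `[0,1]` piecewise in a finite
family of affine functions. -/
theorem finite_piecewiseIn (F : Set (ℝ → ℝ)) (hF : F.Finite)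
    (hAff : ∀ φ ∈ F, Affine φ) :
    {g : Set.Icc (0:ℝ) 1 → ℝ | PiecewiseIn F g}.Finite := by
  classical
  -- The set of crossing points (in [0,1]) of distinct members of F, plus 0 and 1.
  set X : Set ℝ :=
    {x | x ∈ Set.Icc (0:ℝ) 1 ∧ ∃ φ ∈ F, ∃ ψ ∈ F, φ ≠ ψ ∧ φ x = ψ x} with hXdef
  have hXfin : X.Finite := by
    have hsub : X ⊆ ⋃ φ ∈ F, ⋃ ψ ∈ F, {x | φ ≠ ψ ∧ φ x = ψ x} := by
      rintro x ⟨-, φ, hφ, ψ, hψ, hne, hx⟩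
      exact Set.mem_biUnion hφ (Set.mem_biUnion hψ ⟨hne, hx⟩)
    refine Set.Finite.subset ?_ hsub
    refine hF.biUnion fun φ hφ => hF.biUnion fun ψ hψ => ?_
    apply Set.Subsingleton.finite
    rintro x ⟨hne, hx⟩ y ⟨-, hy⟩
    by_contra hxy
    exact hne (affine_eq_of_agree (hAff φ hφ) (hAff ψ hψ) hxy hx hy)
  have hC0fin : (insert (0:ℝ) (insert 1 X)).Finite := by
    exact (hXfin.insert 1).insert 0
  set C : Finset ℝ := hC0fin.toFinset with hCdef
  have hmemC : ∀ x, x ∈ C ↔ x = 0 ∨ x = 1 ∨ x ∈ X := by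
    intro x
    simp [hCdef, Set.Finite.mem_toFinset]
  have h0C : (0:ℝ) ∈ C := (hmemC 0).mpr (Or.inl rfl)
  have h1C : (1:ℝ) ∈ C := (hmemC 1).mpr (Or.inr (Or.inl rfl))
  have hCIcc : ∀ x ∈ C, 0 ≤ x ∧ x ≤ 1 := by
    intro x hx
    rcases (hmemC x).mp hx with rfl | rfl | hx
    · exact ⟨le_rfl, zero_le_one⟩
    · exact ⟨zero_le_one, le_rfl⟩
    · exact ⟨hx.1.1, hx.1.2⟩
  have hcard2 : 2 ≤ C.card := by
    have : ({0, 1} : Finset ℝ) ⊆ C := by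
      intro x hx
      rcases Finset.mem_insert.mp hx with rfl | hx
      · exact h0C
      · rw [Finset.mem_singleton.mp hx]; exact h1C
    calc 2 = ({0, 1} : Finset ℝ).card := by simp
      _ ≤ C.card := Finset.card_le_card this
  obtain ⟨m, hm⟩ : ∃ m, C.card = m + 2 := ⟨C.card - 2, by omega⟩
  set c : Fin (m + 2) ↪o ℝ := C.orderEmbOfFin hm with hcdef
  have hcmem : ∀ i, c i ∈ C := fun i => C.orderEmbOfFin_mem hm i
  have hcrange : ∀ x ∈ C, ∃ i, c i = x := by
    intro x hx
    have : x ∈ Set.range c := by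
      rw [hcdef, Finset.range_orderEmbOfFin]; exact_mod_cast hx
    exact this
  have hclast : c (Fin.last (m + 1)) = 1 := by
    obtain ⟨i1, hi1⟩ := hcrange 1 h1C
    have h1 : (1:ℝ) ≤ c (Fin.last (m + 1)) := hi1 ▸ c.monotone (Fin.le_last i1)
    exact le_antisymm (hCIcc _ (hcmem _)).2 h1
  -- covering: every point of [0,1] lies in some gap
  have hcover : ∀ s : Set.Icc (0:ℝ) 1, ∃ j : Fin (m + 1),
      c j.castSucc ≤ (s : ℝ) ∧ (s : ℝ) ≤ c j.succ := by
    intro s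
    obtain ⟨i0, hi0⟩ := hcrange 0 h0C
    set S : Finset (Fin (m + 2)) := Finset.univ.filter (fun i => c i ≤ (s : ℝ)) with hSdef
    have hSne : S.Nonempty := ⟨i0, by simp [hSdef, hi0, s.2.1]⟩
    set i := S.max' hSne with hidef
    have hiS : i ∈ S := S.max'_mem hSne
    have hci : c i ≤ (s : ℝ) := by simpa [hSdef] using hiS
    by_cases hilt : (i : ℕ) < m + 1
    · refine ⟨⟨i, hilt⟩, ?_, ?_⟩
      · have : (⟨i, hilt⟩ : Fin (m+1)).castSucc = i := by ext; simp
        rw [this]; exact hci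
      · by_contra hcon
        push_neg at hcon
        have hmem : (⟨i, hilt⟩ : Fin (m+1)).succ ∈ S := by
          simp [hSdef]; exact hcon.le
        have := S.le_max' _ hmem
        rw [← hidef] at this
        have : ((⟨i, hilt⟩ : Fin (m+1)).succ : ℕ) ≤ (i : ℕ) := this
        simp at this
    · have hieq : i = Fin.last (m + 1) := by
        ext; simp only [Fin.val_last]; omega
      have hs1 : (s : ℝ) = 1 := by
        have := hci
        rw [hieq, hclast] at this
        exact le_antisymm s.2.2 this
      refine ⟨Fin.last m, ?_, ?_⟩
      · rw [hs1]
        exact (hCIcc _ (hcmem _)).2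
      · have : (Fin.last m).succ = Fin.last (m + 1) := by ext; simp
        rw [this, hclast, hs1]
  -- no crossing point strictly inside a gap
  have hnogap : ∀ j : Fin (m + 1), ∀ x ∈ X,
      c j.castSucc < x → x < c j.succ → False := by
    intro j x hx h1 h2
    obtain ⟨i, hi⟩ := hcrange x ((hmemC x).mpr (Or.inr (Or.inr hx)))
    rw [← hi] at h1 h2
    have hlt1 : j.castSucc < i := c.lt_iff_lt.mp h1
    have hlt2 : i < j.succ := c.lt_iff_lt.mp h2
    have : (j : ℕ) < (i : ℕ) := hlt1
    have : (i : ℕ) < (j : ℕ) + 1 := hlt2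
    omega
  -- Key: on each gap, a piecewise function agrees with one member of F
  have key : ∀ g : Set.Icc (0:ℝ) 1 → ℝ, PiecewiseIn F g → ∀ j : Fin (m + 1),
      ∃ φ ∈ F, ∀ s : Set.Icc (0:ℝ) 1,
        c j.castSucc ≤ (s : ℝ) → (s : ℝ) ≤ c j.succ → g s = φ (s : ℝ) := by
    intro g hg j
    obtain ⟨n, t, hmono, ht0, htn, hpiece⟩ := hg
    set u : ℝ := c j.castSucc with hudef
    set v : ℝ := c j.succ with hvdef
    have huv : u < v := c.strictMono (Fin.castSucc_lt_succ : j.castSucc < j.succ)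
    have hu0 : 0 ≤ u := (hCIcc _ (hcmem _)).1
    have hv1 : v ≤ 1 := (hCIcc _ (hcmem _)).2
    have hn : 0 < n := by
      rcases Nat.eq_zero_or_pos n with rfl | h
      · have : t 0 = t (Fin.last 0) := rfl
        rw [ht0, htn] at this
        norm_num at this
      · exact h
    have main : ∀ k, (hk : k ≤ n) → ∃ φ ∈ F, ∀ s : Set.Icc (0:ℝ) 1,
        u ≤ (s : ℝ) → (s : ℝ) ≤ min (t ⟨k, by omega⟩) v → g s = φ (s : ℝ) := by
      intro k
      induction k with
      | zero =>
        intro _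
        obtain ⟨φ, hφF, hφ⟩ := hpiece ⟨0, hn⟩
        refine ⟨φ, hφF, fun s hs1 hs2 => ?_⟩
        have ht00 : t ⟨0, by omega⟩ = 0 := by
          have : (⟨0, by omega⟩ : Fin (n+1)) = 0 := rfl
          rw [this, ht0]
        rw [ht00] at hs2
        have hs0 : (s : ℝ) = 0 := le_antisymm (le_trans hs2 (min_le_left _ _)) s.2.1
        apply hφ
        · have : (⟨0, hn⟩ : Fin n).castSucc = (⟨0, by omega⟩ : Fin (n+1)) := rfl
          rw [this, ht00, hs0]
        · have hsucc : (⟨0, hn⟩ : Fin n).succ = (⟨1, by omega⟩ : Fin (n+1)) := rfl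
          rw [hsucc, hs0]
          have : t (⟨0, by omega⟩ : Fin (n+1)) ≤ t ⟨1, by omega⟩ := by
            apply hmono; simp [Fin.le_def]
          rw [ht00] at this
          exact this
      | succ k ih =>
        intro hk
        obtain ⟨φ, hφF, hφ⟩ := ih (by omega)
        obtain ⟨ψ, hψF, hψ⟩ := hpiece ⟨k, by omega⟩
        have hcs : (⟨k, by omega⟩ : Fin n).castSucc = (⟨k, by omega⟩ : Fin (n+1)) := rfl
        have hsc : (⟨k, by omega⟩ : Fin n).succ = (⟨k+1, by omega⟩ : Fin (n+1)) := rfl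
        set a : ℝ := t ⟨k, by omega⟩ with hadef
        set b : ℝ := t ⟨k+1, by omega⟩ with hbdef
        have hab : a ≤ b := by apply hmono; simp [Fin.le_def]
        by_cases hau : a ≤ u
        · refine ⟨ψ, hψF, fun s hs1 hs2 => ?_⟩
          apply hψ
          · rw [hcs, ← hadef]; linarith
          · rw [hsc, ← hbdef]; exact le_trans hs2 (min_le_left _ _)
        · push_neg at hau
          by_cases hva : v ≤ a
          · refine ⟨φ, hφF, fun s hs1 hs2 => ?_⟩
            apply hφ s hs1
            have h1 : (s : ℝ) ≤ v := le_trans hs2 (min_le_right _ _)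
            exact le_min (le_trans h1 hva) h1
          · push_neg at hva
            -- u < a < v : the breakpoint a is interior, so φ = ψ
            have ha01 : a ∈ Set.Icc (0:ℝ) 1 := ⟨by linarith, by linarith⟩
            set sa : Set.Icc (0:ℝ) 1 := ⟨a, ha01⟩ with hsadef
            have hφa : g sa = φ a := hφ sa (le_of_lt hau) (le_min le_rfl hva.le)
            have hψa : g sa = ψ a := by
              apply hψ
              · rw [hcs, ← hadef]
              · rw [hsc, ← hbdef]; exact hab
            have hφψ : φ = ψ := by
              by_contra hne
              exact hnogap j a ⟨ha01, φ, hφF, ψ, hψF, hne, by rw [← hφa, ← hψa]⟩ hau hva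
            refine ⟨ψ, hψF, fun s hs1 hs2 => ?_⟩
            by_cases hsa : (s : ℝ) ≤ a
            · rw [← hφψ]
              apply hφ s hs1
              exact le_min hsa (le_trans hs2 (min_le_right _ _))
            · push_neg at hsa
              apply hψ
              · rw [hcs, ← hadef]; exact hsa.le
              · rw [hsc, ← hbdef]; exact le_trans hs2 (min_le_left _ _)
    obtain ⟨φ, hφF, hφ⟩ := main n le_rfl
    refine ⟨φ, hφF, fun s hs1 hs2 => ?_⟩
    apply hφ s hs1
    have : t ⟨n, by omega⟩ = 1 := by
      have : (⟨n, by omega⟩ : Fin (n+1)) = Fin.last n := rfl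
      rw [this, htn]
    rw [this]
    exact le_min (le_trans hs2 hv1) hs2
  -- Conclude: the set injects into selections of pieces
  set J : Set.Icc (0:ℝ) 1 → Fin (m + 1) := fun s => (hcover s).choose with hJdef
  have hJ : ∀ s : Set.Icc (0:ℝ) 1,
      c (J s).castSucc ≤ (s : ℝ) ∧ (s : ℝ) ≤ c (J s).succ := fun s => (hcover s).choose_spec
  set T : (Fin (m + 1) → (ℝ → ℝ)) → (Set.Icc (0:ℝ) 1 → ℝ) :=
    fun σ s => σ (J s) (s : ℝ) with hTdef
  have hsub : {g : Set.Icc (0:ℝ) 1 → ℝ | PiecewiseIn F g} ⊆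
      T '' (Set.univ.pi fun _ : Fin (m + 1) => F) := by
    intro g hg
    choose φ hφF hφ using key g hg
    refine ⟨φ, fun j _ => hφF j, ?_⟩
    funext s
    exact (hφ (J s) s (hJ s).1 (hJ s).2).symm
  exact Set.Finite.subset (Set.Finite.image T (Set.Finite.pi fun _ => hF)) hsub
end

section
/- Let F be a finite set of affine functions ℝ → ℝ and let (g_k)_{k ∈ ℕ} be a sequence of functions [0,1] → ℝ, each piecewise in F, which is pointwise nonincreasing: g_{k+1}(t) ≤ g_k(t) for all k ∈ ℕ and all t ∈ [0,1]. Then the sequence is eventually constant: there exists K ∈ ℕ such that g_k = g_K for all k ≥ K. (This is the termination argument for the value iteration algorithm on two-clock kernel weighted timed games, whose iterates are pointwise nonincreasing functions drawn from a finite family of continuous piecewise-affine functions.) -/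
lemma affine_eq_of_two {φ ψ : ℝ → ℝ} (hφ : Affine φ) (hψ : Affine ψ)
    {p q : ℝ} (hpq : p ≠ q) (h1 : φ p = ψ p) (h2 : φ q = ψ q) : φ = ψ := by
  obtain ⟨a, b, hab⟩ := hφ
  obtain ⟨a', b', hab'⟩ := hψ
  rw [hab, hab'] at h1 h2
  have h3 : (a - a') * (p - q) = 0 := by ring_nf; linarith
  have ha : a = a' := by
    rcases mul_eq_zero.1 h3 with h | h
    · linarith
    · exact absurd (by linarith : p = q) hpq
  have hb : b = b' := by rw [ha] at h1; linarith
  funext r; rw [hab, hab', ha, hb]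

lemma antitone_finite_range_stab (a : ℕ → ℝ) (hstep : ∀ k, a (k+1) ≤ a k)
    (V : Set ℝ) (hV : V.Finite) (hr : ∀ k, a k ∈ V) :
    ∃ K : ℕ, ∀ k, K ≤ k → a k = a K := by
  have hanti : Antitone a := antitone_nat_of_succ_le hstep
  have hfin : (Set.range a).Finite := hV.subset (Set.range_subset_iff.2 hr)
  obtain ⟨m, ⟨K, hK⟩, hmin⟩ := Set.exists_min_image (Set.range a) id hfin ⟨a 0, Set.mem_range_self 0⟩
  refine ⟨K, fun k hk => le_antisymm (hanti hk) ?_⟩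
  have := hmin (a k) (Set.mem_range_self k)
  simpa [hK] using this

lemma piecewise_single_on (F : Set (ℝ → ℝ)) (h : Set.Icc (0:ℝ) 1 → ℝ)
    (hp : PiecewiseIn F h) (u v : ℝ) (hu : 0 ≤ u) (huv : u < v) (hv : v ≤ 1)
    (hfree : ∀ φ ∈ F, ∀ ψ ∈ F, ∀ p : ℝ, u < p → p < v → φ p = ψ p → φ = ψ) :
    ∃ φ ∈ F, ∀ s : Set.Icc (0:ℝ) 1, u ≤ (s : ℝ) → (s : ℝ) ≤ v → h s = φ (s : ℝ) := by
  obtain ⟨n, t, htm, ht0, htl, hpc⟩ := hp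
  have hn : 0 < n := by
    rcases Nat.eq_zero_or_pos n with h0 | h0
    · subst h0
      rw [show Fin.last 0 = 0 from rfl, ht0] at htl
      norm_num at htl
    · exact h0
  choose φ hφF hφeq using hpc
  -- bounds on t values
  have ht_lb : ∀ i : Fin (n+1), 0 ≤ t i := fun i => ht0 ▸ htm (Fin.zero_le i)
  have ht_ub : ∀ i : Fin (n+1), t i ≤ 1 := fun i => htl ▸ htm (Fin.le_last i)
  -- pick a piece containing s that overlaps (u, v)
  have pick : ∀ w : ℝ, 0 ≤ w → u ≤ w → w ≤ v →
      ∃ i : Fin n, t i.castSucc ≤ w ∧ w ≤ t i.succ ∧ t i.castSucc < v ∧ u < t i.succ := by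
    intro w hw0 huw hwv
    have hP : ∃ j : ℕ, ∃ hj : j < n, w ≤ t (Fin.succ ⟨j, hj⟩) ∧ u < t (Fin.succ ⟨j, hj⟩) := by
      refine ⟨n - 1, Nat.sub_lt hn one_pos, ?_, ?_⟩ <;>
        rw [show Fin.succ ⟨n-1, Nat.sub_lt hn one_pos⟩ = Fin.last n from
          Fin.ext (by simp [Fin.last, Fin.val_succ]; omega), htl]
      · exact le_trans hwv hv
      · exact lt_of_lt_of_le huv hv
    classical
    let j := Nat.find hP
    obtain ⟨hj, hw, hu'⟩ := Nat.find_spec hP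
    refine ⟨⟨j, hj⟩, ?_, hw, ?_, hu'⟩
    · -- t castSucc ≤ w
      rcases Nat.eq_zero_or_pos j with hj0 | hj0
      · have : (⟨j, hj⟩ : Fin n).castSucc = 0 := Fin.ext (by simp [hj0])
        rw [this, ht0]; exact hw0
      · have hlt := Nat.find_min hP (show j - 1 < j from Nat.sub_lt hj0 one_pos)
        push_neg at hlt
        have hcast : (⟨j, hj⟩ : Fin n).castSucc =
            Fin.succ ⟨j - 1, lt_of_le_of_lt (Nat.sub_le j 1) hj⟩ :=
          Fin.ext (by simp [Nat.sub_add_cancel hj0])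
        rw [hcast]
        by_cases hc : w ≤ t (Fin.succ ⟨j - 1, lt_of_le_of_lt (Nat.sub_le j 1) hj⟩)
        · have := hlt (lt_of_le_of_lt (Nat.sub_le j 1) hj) hc
          linarith
        · linarith [not_le.1 hc]
    · -- t castSucc < v
      rcases Nat.eq_zero_or_pos j with hj0 | hj0
      · have : (⟨j, hj⟩ : Fin n).castSucc = 0 := Fin.ext (by simp [hj0])
        rw [this, ht0]; exact lt_of_le_of_lt hu huv
      · have hlt := Nat.find_min hP (show j - 1 < j from Nat.sub_lt hj0 one_pos)
        push_neg at hlt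
        have hcast : (⟨j, hj⟩ : Fin n).castSucc =
            Fin.succ ⟨j - 1, lt_of_le_of_lt (Nat.sub_le j 1) hj⟩ :=
          Fin.ext (by simp [Nat.sub_add_cancel hj0])
        rw [hcast]
        by_cases hc : w ≤ t (Fin.succ ⟨j - 1, lt_of_le_of_lt (Nat.sub_le j 1) hj⟩)
        · have := hlt (lt_of_le_of_lt (Nat.sub_le j 1) hj) hc
          linarith
        · linarith [not_le.1 hc]
  -- all overlapping pieces have the same φ
  have key : ∀ m : ℕ, ∀ hm : m < n, ∀ a : Fin n, (a : ℕ) ≤ m →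
      t a.castSucc < v → u < t a.succ →
      t (⟨m, hm⟩ : Fin n).castSucc < v → u < t (⟨m, hm⟩ : Fin n).succ →
      φ a = φ ⟨m, hm⟩ := by
    intro m
    induction m with
    | zero =>
      intro hm a ha _ _ _ _
      have : a = ⟨0, hm⟩ := Fin.ext (Nat.le_zero.1 ha)
      rw [this]
    | succ m ih =>
      intro hm a ha hav hau hm1v hm1u
      by_cases hae : (a : ℕ) = m + 1
      · have : a = ⟨m+1, hm⟩ := Fin.ext hae
        rw [this]
      · have ham : (a : ℕ) ≤ m := Nat.lt_succ_iff.1 (lt_of_le_of_ne ha hae)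
        have hmn : m < n := lt_trans (Nat.lt_succ_self m) hm
        have hbridge : (⟨m+1, hm⟩ : Fin n).castSucc = Fin.succ (⟨m, hmn⟩ : Fin n) :=
          Fin.ext (by simp)
        have hmv : t (⟨m, hmn⟩ : Fin n).castSucc < v :=
          lt_of_le_of_lt (htm (by simp [Fin.le_def])) hm1v
        have hmu : u < t (⟨m, hmn⟩ : Fin n).succ :=
          lt_of_lt_of_le hau (htm (by simp [Fin.le_def, ham]))
        have h1 : φ a = φ ⟨m, hmn⟩ := ih hmn a ham hav hau hmv hmu
        -- crossing point p
        set p : ℝ := t (Fin.succ (⟨m, hmn⟩ : Fin n)) with hp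
        have hpIcc : p ∈ Set.Icc (0:ℝ) 1 := ⟨ht_lb _, ht_ub _⟩
        have hP1 : h ⟨p, hpIcc⟩ = φ ⟨m, hmn⟩ p :=
          hφeq ⟨m, hmn⟩ ⟨p, hpIcc⟩ (htm (Fin.castSucc_le_succ _)) le_rfl
        have hpeq : p = t (⟨m+1, hm⟩ : Fin n).castSucc := by rw [hbridge]
        have hP2 : h ⟨p, hpIcc⟩ = φ ⟨m+1, hm⟩ p := by
          refine hφeq ⟨m+1, hm⟩ ⟨p, hpIcc⟩ (le_of_eq hpeq.symm) ?_
          calc (⟨p, hpIcc⟩ : Set.Icc (0:ℝ) 1).1 = t (⟨m+1, hm⟩ : Fin n).castSucc := hpeq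
            _ ≤ _ := htm (Fin.castSucc_le_succ _)
        have hpu : u < p := hmu
        have hpv : p < v := hpeq ▸ hm1v
        have h2 : φ ⟨m, hmn⟩ = φ ⟨m+1, hm⟩ :=
          hfree _ (hφF _) _ (hφF _) p hpu hpv (hP1 ▸ hP2 ▸ rfl)
        rw [h1, h2]
  -- the distinguished piece at u
  obtain ⟨i0, hi0a, hi0b, hi0c, hi0d⟩ := pick u hu le_rfl huv.le
  refine ⟨φ i0, hφF i0, ?_⟩
  intro s hus hsv
  obtain ⟨i, hia, hib, hic, hid⟩ := pick (s : ℝ) s.2.1 hus hsv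
  have heq : φ i = φ i0 := by
    rcases le_total (i : ℕ) (i0 : ℕ) with hle | hle
    · have := key (i0 : ℕ) i0.2 i hle hic hid (by simpa using hi0c) (by simpa using hi0d)
      simpa using this
    · have := key (i : ℕ) i.2 i0 hle hi0c hi0d (by simpa using hic) (by simpa using hid)
      simpa using this.symm
  rw [hφeq i s hia hib, heq]

/-- Stabilization of the sequence on a crossing-free interval. -/
lemma stab_on_interval (F : Set (ℝ → ℝ)) (hF : F.Finite) (hAff : ∀ φ ∈ F, Affine φ)
    (g : ℕ → Set.Icc (0:ℝ) 1 → ℝ) (hg : ∀ k, PiecewiseIn F (g k))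
    (hmono : ∀ k, ∀ t : Set.Icc (0:ℝ) 1, g (k + 1) t ≤ g k t)
    (u v : ℝ) (hu : 0 ≤ u) (huv : u < v) (hv : v ≤ 1)
    (hfree : ∀ φ ∈ F, ∀ ψ ∈ F, ∀ p : ℝ, u < p → p < v → φ p = ψ p → φ = ψ) :
    ∃ K : ℕ, ∀ k, K ≤ k → ∀ s : Set.Icc (0:ℝ) 1,
      u ≤ (s : ℝ) → (s : ℝ) ≤ v → g k s = g K s := by
  have hB : ∀ k, ∃ φ ∈ F, ∀ s : Set.Icc (0:ℝ) 1,
      u ≤ (s : ℝ) → (s : ℝ) ≤ v → g k s = φ (s : ℝ) :=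
    fun k => piecewise_single_on F (g k) (hg k) u v hu huv hv hfree
  choose φ hφF hφeq using hB
  have huI : u ∈ Set.Icc (0:ℝ) 1 := ⟨hu, le_trans huv.le hv⟩
  have hvI : v ∈ Set.Icc (0:ℝ) 1 := ⟨le_trans hu huv.le, hv⟩
  set pu : Set.Icc (0:ℝ) 1 := ⟨u, huI⟩
  set pv : Set.Icc (0:ℝ) 1 := ⟨v, hvI⟩
  obtain ⟨Ku, hKu⟩ := antitone_finite_range_stab (fun k => g k pu)
    (fun k => hmono k pu) ((fun ψ : ℝ → ℝ => ψ u) '' F) (hF.image _)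
    (fun k => ⟨φ k, hφF k, (hφeq k pu le_rfl huv.le).symm⟩)
  obtain ⟨Kv, hKv⟩ := antitone_finite_range_stab (fun k => g k pv)
    (fun k => hmono k pv) ((fun ψ : ℝ → ℝ => ψ v) '' F) (hF.image _)
    (fun k => ⟨φ k, hφF k, (hφeq k pv huv.le le_rfl).symm⟩)
  refine ⟨max Ku Kv, fun k hk s hus hsv => ?_⟩
  have hku : Ku ≤ k := le_trans (le_max_left _ _) hk
  have hkv : Kv ≤ k := le_trans (le_max_right _ _) hk
  have hgu : g k pu = g (max Ku Kv) pu := (hKu k hku).trans (hKu _ (le_max_left _ _)).symm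
  have hgv : g k pv = g (max Ku Kv) pv := (hKv k hkv).trans (hKv _ (le_max_right _ _)).symm
  have hφu : φ k u = φ (max Ku Kv) u := by
    rw [← hφeq k pu le_rfl huv.le, ← hφeq (max Ku Kv) pu le_rfl huv.le]; exact hgu
  have hφv : φ k v = φ (max Ku Kv) v := by
    rw [← hφeq k pv huv.le le_rfl, ← hφeq (max Ku Kv) pv huv.le le_rfl]; exact hgv
  have hφeq' : φ k = φ (max Ku Kv) :=
    affine_eq_of_two (hAff _ (hφF k)) (hAff _ (hφF _)) (ne_of_lt huv) hφu hφv
  rw [hφeq k s hus hsv, hφeq (max Ku Kv) s hus hsv, hφeq']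


/-- A pointwise nonincreasing sequence of functions on `[0,1]`, each piecewise
in a fixed finite family of affine functions, is eventually constant. -/
theorem eventually_constant_of_antitone_piecewiseIn
    (F : Set (ℝ → ℝ)) (hF : F.Finite) (hAff : ∀ φ ∈ F, Affine φ)
    (g : ℕ → Set.Icc (0:ℝ) 1 → ℝ) (hg : ∀ k, PiecewiseIn F (g k))
    (hmono : ∀ k, ∀ t : Set.Icc (0:ℝ) 1, g (k + 1) t ≤ g k t) :
    ∃ K : ℕ, ∀ k : ℕ, K ≤ k → g k = g K := by
  classical
  -- the finite set of crossing points
  set C : Set ℝ := {s : ℝ | ∃ φ ∈ F, ∃ ψ ∈ F, φ ≠ ψ ∧ φ s = ψ s} with hCdef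
  have hCfin : C.Finite := by
    have hsub : C ⊆ ⋃ φ ∈ F, ⋃ ψ ∈ F, {s : ℝ | φ ≠ ψ ∧ φ s = ψ s} := by
      rintro s ⟨φ, hφ, ψ, hψ, hne, heq⟩
      simp only [Set.mem_iUnion]
      exact ⟨φ, hφ, ψ, hψ, hne, heq⟩
    refine (Set.Finite.biUnion hF fun φ hφ => Set.Finite.biUnion hF fun ψ hψ => ?_).subset hsub
    refine Set.Subsingleton.finite ?_
    intro s1 h1 s2 h2
    by_contra hne
    exact h1.1 (affine_eq_of_two (hAff _ hφ) (hAff _ hψ) hne h1.2 h2.2)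
  -- local stabilization around each point
  have local_stab : ∀ x : Set.Icc (0:ℝ) 1, ∃ K : ℕ, ∃ ε : ℝ, 0 < ε ∧
      ∀ k, K ≤ k → ∀ s : Set.Icc (0:ℝ) 1, |(s : ℝ) - (x : ℝ)| < ε → g k s = g K s := by
    intro x
    have hDfin : (C \ {(x : ℝ)}).Finite := hCfin.diff
    have hDopen : IsOpen (C \ {(x : ℝ)})ᶜ := hDfin.isClosed.isOpen_compl
    have hxD : (x : ℝ) ∈ (C \ {(x : ℝ)})ᶜ := fun h => h.2 rfl
    obtain ⟨ε, hε, hball⟩ := Metric.isOpen_iff.1 hDopen _ hxD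
    have hnotC : ∀ p : ℝ, |p - (x : ℝ)| < ε → p ≠ (x : ℝ) → p ∉ C := by
      intro p hp hpx hpC
      exact hball (show dist p (x:ℝ) < ε from by rwa [Real.dist_eq]) ⟨hpC, hpx⟩
    have hfree : ∀ a b : ℝ, (∀ p : ℝ, a < p → p < b → |p - (x:ℝ)| < ε ∧ p ≠ (x:ℝ)) →
        ∀ φ ∈ F, ∀ ψ ∈ F, ∀ p : ℝ, a < p → p < b → φ p = ψ p → φ = ψ := by
      intro a b hab φ hφ ψ hψ p hap hpb heq
      by_contra hne
      exact hnotC p (hab p hap hpb).1 (hab p hap hpb).2 ⟨φ, hφ, ψ, hψ, hne, heq⟩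
    -- left interval
    have HL : 0 < (x : ℝ) → ∃ K : ℕ, ∀ k, K ≤ k → ∀ s : Set.Icc (0:ℝ) 1,
        (x : ℝ) - ε < (s : ℝ) → (s : ℝ) ≤ (x : ℝ) → g k s = g K s := by
      intro hx0
      obtain ⟨K, hK⟩ := stab_on_interval F hF hAff g hg hmono (max ((x:ℝ) - ε) 0) (x : ℝ)
        (le_max_right _ _) (max_lt (by linarith) hx0) x.2.2
        (hfree _ _ (fun p hap hpb => ⟨by
          rw [abs_sub_lt_iff]
          constructor <;> [linarith; linarith [lt_of_le_of_lt (le_max_left ((x:ℝ) - ε) 0) hap]],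
          ne_of_lt hpb⟩))
      exact ⟨K, fun k hk s h1 h2 => hK k hk s (max_le h1.le s.2.1) h2⟩
    -- right interval
    have HR : (x : ℝ) < 1 → ∃ K : ℕ, ∀ k, K ≤ k → ∀ s : Set.Icc (0:ℝ) 1,
        (x : ℝ) ≤ (s : ℝ) → (s : ℝ) < (x : ℝ) + ε → g k s = g K s := by
      intro hx1
      obtain ⟨K, hK⟩ := stab_on_interval F hF hAff g hg hmono (x : ℝ) (min ((x:ℝ) + ε) 1)
        x.2.1 (lt_min (by linarith) hx1) (min_le_right _ _)
        (hfree _ _ (fun p hap hpb => ⟨by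
          rw [abs_sub_lt_iff]
          constructor <;> [linarith [lt_of_lt_of_le hpb (min_le_left ((x:ℝ) + ε) 1)]; linarith],
          (ne_of_lt hap).symm⟩))
      exact ⟨K, fun k hk s h1 h2 => hK k hk s h1 (le_min h2.le s.2.2)⟩
    by_cases hx0 : 0 < (x : ℝ)
    · by_cases hx1 : (x : ℝ) < 1
      · obtain ⟨KL, hKL⟩ := HL hx0
        obtain ⟨KR, hKR⟩ := HR hx1
        refine ⟨max KL KR, ε, hε, fun k hk s hs => ?_⟩
        rcases le_total (s : ℝ) (x : ℝ) with h | h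
        · have h1 : (x : ℝ) - ε < (s : ℝ) := by
            rw [abs_sub_lt_iff] at hs; linarith [hs.2]
          exact (hKL k (le_trans (le_max_left _ _) hk) s h1 h).trans
            (hKL (max KL KR) (le_max_left _ _) s h1 h).symm
        · have h1 : (s : ℝ) < (x : ℝ) + ε := by
            rw [abs_sub_lt_iff] at hs; linarith [hs.1]
          exact (hKR k (le_trans (le_max_right _ _) hk) s h h1).trans
            (hKR (max KL KR) (le_max_right _ _) s h h1).symm
      · -- x = 1, every s satisfies s ≤ x
        obtain ⟨KL, hKL⟩ := HL hx0
        refine ⟨KL, ε, hε, fun k hk s hs => ?_⟩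
        have hsx : (s : ℝ) ≤ (x : ℝ) := le_trans s.2.2 (not_lt.1 hx1)
        have h1 : (x : ℝ) - ε < (s : ℝ) := by
          rw [abs_sub_lt_iff] at hs; linarith [hs.2]
        exact hKL k hk s h1 hsx
    · -- x = 0, every s satisfies x ≤ s
      have hx0' : (x : ℝ) < 1 := lt_of_le_of_lt (not_lt.1 hx0) one_pos
      obtain ⟨KR, hKR⟩ := HR hx0'
      refine ⟨KR, ε, hε, fun k hk s hs => ?_⟩
      have hxs : (x : ℝ) ≤ (s : ℝ) := le_trans (not_lt.1 hx0) s.2.1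
      have h1 : (s : ℝ) < (x : ℝ) + ε := by
        rw [abs_sub_lt_iff] at hs; linarith [hs.1]
      exact hKR k hk s hxs h1
  -- compactness: finitely many balls cover [0,1]
  choose K ε hε hstab using local_stab
  obtain ⟨T, -, hT⟩ := (isCompact_univ (X := Set.Icc (0:ℝ) 1)).elim_nhds_subcover
    (fun x => Metric.ball x (ε x)) (fun x _ => Metric.ball_mem_nhds x (hε x))
  set Kmax := T.sup K with hKmax
  refine ⟨Kmax, fun k hk => funext fun s => ?_⟩
  have hs := hT (Set.mem_univ s)
  simp only [Set.mem_iUnion] at hs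
  obtain ⟨x, hxT, hxs⟩ := hs
  have hdist : |(s : ℝ) - (x : ℝ)| < ε x := by
    have := Metric.mem_ball.1 hxs
    rwa [Subtype.dist_eq, Real.dist_eq] at this
  have hKx : K x ≤ Kmax := Finset.le_sup hxT
  exact (hstab x k (le_trans hKx hk) s hdist).trans (hstab x Kmax hKx s hdist).symm
end

section
/- Let F be a finite set of affine functions ℝ → ℝ and let g : [0,1] → ℝ be piecewise in F. Define h : [0,1] → ℝ by h(Δ) = min_{t ∈ [Δ,1]} g(t) (the minimum exists since g is continuous and [Δ,1] is compact). Then h is continuous on [0,1], monotone nondecreasing, and piecewise in F ∪ {constant functions t ↦ v : v is a local minimum value of g relative to [0,1]}. (This is the one-step update Opt_t(Δ) = inf_{Δ ≤ Δ' ≤ 1} Opt_{ℓ'}(Δ') for a Min location in the paper's value iteration on two-clock kernel games: it replaces g on finitely many intervals by constants equal to local minimum values of g, preserving continuity.) -/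
lemma affine_lower (a b u v x : ℝ) (h1 : u ≤ x) (h2 : x ≤ v) :
    min (a * u + b) (a * v + b) ≤ a * x + b := by
  rcases le_total 0 a with ha | ha
  · exact le_trans (min_le_left _ _) (by nlinarith)
  · exact le_trans (min_le_right _ _) (by nlinarith)

lemma affine_upper (a b u v x : ℝ) (h1 : u ≤ x) (h2 : x ≤ v) :
    a * x + b ≤ max (a * u + b) (a * v + b) := by
  rcases le_total 0 a with ha | ha
  · exact le_trans (by nlinarith) (le_max_right _ _)
  · exact le_trans (by nlinarith) (le_max_left _ _)

lemma exists_piece : ∀ {n : ℕ} (t : Fin (n + 2) → ℝ) (x : ℝ), Monotone t →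
    t 0 ≤ x → x ≤ t (Fin.last (n + 1)) →
    ∃ i : Fin (n + 1), t i.castSucc ≤ x ∧ x ≤ t i.succ := by
  intro n
  induction n with
  | zero =>
    intro t x ht h0 h1
    refine ⟨0, ?_, ?_⟩
    · simpa using h0
    · simpa using h1
  | succ n ih =>
    intro t x ht h0 h1
    rcases le_total (t (Fin.last (n + 1)).castSucc) x with hx | hx
    · refine ⟨Fin.last (n + 1), hx, ?_⟩
      rwa [Fin.succ_last]
    · obtain ⟨i, hi1, hi2⟩ := ih (t ∘ Fin.castSucc) x
        (fun p q hpq => ht (by simpa using hpq))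
        (by simpa using h0) (by simpa using hx)
      refine ⟨i.castSucc, hi1, ?_⟩
      rw [Fin.succ_castSucc]; exact hi2

lemma continuous_of_pieces {n : ℕ} (t : Fin (n + 1) → ℝ) (ht : Monotone t)
    (h0 : t 0 = 0) (h1 : t (Fin.last n) = 1) (f : Set.Icc (0:ℝ) 1 → ℝ)
    (H : ∀ i : Fin n, ∃ ψ : ℝ → ℝ, Continuous ψ ∧ ∀ s : Set.Icc (0:ℝ) 1,
      t i.castSucc ≤ (s : ℝ) → (s : ℝ) ≤ t i.succ → f s = ψ (s : ℝ)) :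
    Continuous f := by
  obtain ⟨m, rfl⟩ : ∃ m, n = m + 1 := by
    cases n with
    | zero =>
      exfalso
      have h1' : t 0 = 1 := h1
      rw [h0] at h1'
      norm_num at h1'
    | succ m => exact ⟨m, rfl⟩
  choose ψ hψc hψ using H
  apply LocallyFinite.continuous
    (f := fun i : Fin (m + 1) =>
      {s : Set.Icc (0:ℝ) 1 | t i.castSucc ≤ (s : ℝ) ∧ (s : ℝ) ≤ t i.succ})
    (locallyFinite_of_finite _)
  · ext s
    simp only [Set.mem_iUnion, Set.mem_univ, iff_true, Set.mem_setOf_eq]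
    exact exists_piece t s ht (by rw [h0]; exact s.2.1) (by rw [h1]; exact s.2.2)
  · intro i
    exact IsClosed.inter (isClosed_le continuous_const continuous_subtype_val)
      (isClosed_le continuous_subtype_val continuous_const)
  · intro i
    exact ((hψc i).comp continuous_subtype_val).continuousOn.congr
      (fun s hs => hψ i s hs.1 hs.2)

/-- The running minimum over `[Δ, 1]` of a function piecewise in a finite
family of affine functions is continuous, nondecreasing, and piecewise in the
family enlarged by the constants equal to local minimum values. -/
theorem min_right_update
    (F : Set (ℝ → ℝ)) (hF : F.Finite) (hAff : ∀ φ ∈ F, Affine φ)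
    (g : Set.Icc (0:ℝ) 1 → ℝ) (hg : PiecewiseIn F g)
    (h : Set.Icc (0:ℝ) 1 → ℝ)
    (hh : ∀ Δ : Set.Icc (0:ℝ) 1,
      IsLeast {v : ℝ | ∃ t : Set.Icc (0:ℝ) 1, (Δ : ℝ) ≤ (t : ℝ) ∧ g t = v} (h Δ)) :
    Continuous h ∧ Monotone h ∧
      PiecewiseIn (F ∪ {φ : ℝ → ℝ | ∃ v : ℝ,
        (∃ t₀ : Set.Icc (0:ℝ) 1, IsLocalMin g t₀ ∧ g t₀ = v) ∧
        ∀ t : ℝ, φ t = v}) h := by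
  classical
  set Fbig := F ∪ {φ : ℝ → ℝ | ∃ v : ℝ,
      (∃ t₀ : Set.Icc (0:ℝ) 1, IsLocalMin g t₀ ∧ g t₀ = v) ∧
      ∀ t : ℝ, φ t = v} with hFbigdef
  obtain ⟨n, t, ht, ht0, ht1, hpc⟩ := hg
  have hle : ∀ Δ : Set.Icc (0:ℝ) 1, h Δ ≤ g Δ := fun Δ => (hh Δ).2 ⟨Δ, le_refl _, rfl⟩
  have hmono : Monotone h := by
    intro Δ₁ Δ₂ h12
    obtain ⟨s, hs, hgs⟩ := (hh Δ₂).1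
    rw [← hgs]
    exact (hh Δ₁).2 ⟨s, le_trans (Subtype.coe_le_coe.mpr h12) hs, rfl⟩
  have tmem : ∀ j : Fin (n + 1), t j ∈ Set.Icc (0:ℝ) 1 := fun j =>
    ⟨by rw [← ht0]; exact ht (Fin.zero_le j), by rw [← ht1]; exact ht (Fin.le_last j)⟩
  choose φ hφF hφ using hpc
  choose a b hab using fun i => hAff (φ i) (hφF i)
  obtain ⟨m, hmdef⟩ : ∃ m : Fin n → ℝ, ∀ i, m i = h ⟨t i.succ, tmem i.succ⟩ :=
    ⟨_, fun i => rfl⟩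
  have htt : ∀ i : Fin n, t i.castSucc ≤ t i.succ := fun i => ht (Fin.castSucc_le_succ i)
  have hgr : ∀ i : Fin n, g ⟨t i.succ, tmem i.succ⟩ = φ i (t i.succ) := fun i =>
    hφ i ⟨t i.succ, tmem i.succ⟩ (htt i) (le_refl _)
  have hml : ∀ i : Fin n, m i ≤ φ i (t i.succ) := by
    intro i
    rw [hmdef i, ← hgr i]
    exact hle ⟨t i.succ, tmem i.succ⟩
  -- the key formula : on piece i, h is the min of the affine piece and m i
  have K2 : ∀ (i : Fin n) (s : Set.Icc (0:ℝ) 1), t i.castSucc ≤ (s:ℝ) → (s:ℝ) ≤ t i.succ →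
      h s = min (φ i (s:ℝ)) (m i) := by
    intro i s hs1 hs2
    have hsm : h s ≤ m i := by
      obtain ⟨s', hs', hgs'⟩ := (hh ⟨t i.succ, tmem i.succ⟩).1
      rw [hmdef i, ← hgs']
      exact (hh s).2 ⟨s', le_trans hs2 hs', rfl⟩
    have hsφ : h s ≤ φ i (s:ℝ) := by rw [← hφ i s hs1 hs2]; exact hle s
    refine le_antisymm (le_min hsφ hsm) ?_
    obtain ⟨s', hs', hgs'⟩ := (hh s).1
    rw [← hgs']
    rcases le_total ((s':ℝ)) (t i.succ) with hc | hc
    · rw [hφ i s' (le_trans hs1 hs') hc, hab i ((s':ℝ)), hab i ((s:ℝ))]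
      have h2 : min (a i * (s:ℝ) + b i) (a i * t i.succ + b i) ≤ a i * (s':ℝ) + b i :=
        affine_lower _ _ _ _ _ hs' hc
      have h3 : m i ≤ a i * t i.succ + b i := by rw [← hab i]; exact hml i
      exact le_trans (min_le_min (le_refl _) h3) h2
    · have hm' : m i ≤ g s' := by
        rw [hmdef i]
        exact (hh ⟨t i.succ, tmem i.succ⟩).2 ⟨s', hc, rfl⟩
      exact le_trans (min_le_right _ _) hm'
  -- split points
  obtain ⟨c, hcdef⟩ : ∃ c : Fin n → ℝ, c = fun i => if φ i (t i.castSucc) ≤ m i then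
      (if φ i (t i.succ) ≤ m i then t i.succ else (m i - b i) / a i) else t i.castSucc :=
    ⟨_, rfl⟩
  have hc1 : ∀ i : Fin n, ¬ φ i (t i.castSucc) ≤ m i → c i = t i.castSucc := by
    intro i hA; simp only [hcdef]; rw [if_neg hA]
  have hc2 : ∀ i : Fin n, φ i (t i.castSucc) ≤ m i → φ i (t i.succ) ≤ m i →
      c i = t i.succ := by
    intro i hA hB; simp only [hcdef]; rw [if_pos hA, if_pos hB]
  have hc3 : ∀ i : Fin n, φ i (t i.castSucc) ≤ m i → ¬ φ i (t i.succ) ≤ m i →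
      c i = (m i - b i) / a i := by
    intro i hA hB; simp only [hcdef]; rw [if_pos hA, if_neg hB]
  -- facts in the "crossing" case
  have h2b : ∀ i : Fin n, φ i (t i.castSucc) ≤ m i → m i < φ i (t i.succ) →
      0 < a i ∧ φ i (c i) = m i ∧ t i.castSucc ≤ c i ∧ c i < t i.succ := by
    intro i hA hB
    have e1 := hab i (t i.castSucc)
    have e2 := hab i (t i.succ)
    have ha : 0 < a i := by nlinarith [htt i]
    have hceq : c i = (m i - b i) / a i := hc3 i hA (not_le.mpr hB)
    refine ⟨ha, ?_, ?_, ?_⟩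
    · rw [hceq, hab i]; field_simp; ring
    · rw [hceq, le_div_iff₀ ha]; nlinarith
    · rw [hceq, div_lt_iff₀ ha]; nlinarith
  have K1 : ∀ i : Fin n, t i.castSucc ≤ c i ∧ c i ≤ t i.succ := by
    intro i
    by_cases hA : φ i (t i.castSucc) ≤ m i
    · by_cases hB : φ i (t i.succ) ≤ m i
      · rw [hc2 i hA hB]; exact ⟨htt i, le_refl _⟩
      · obtain ⟨_, _, h4, h5⟩ := h2b i hA (not_le.mp hB); exact ⟨h4, h5.le⟩
    · rw [hc1 i hA]; exact ⟨le_refl _, htt i⟩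
  have cmem : ∀ i : Fin n, c i ∈ Set.Icc (0:ℝ) 1 := fun i =>
    ⟨le_trans (tmem i.castSucc).1 (K1 i).1, le_trans (K1 i).2 (tmem i.succ).2⟩
  -- value of h at the split point when the constant regime is active
  have hhc : ∀ i : Fin n, (m i < φ i (t i.castSucc) ∨ m i < φ i (t i.succ)) →
      h ⟨c i, cmem i⟩ = m i := by
    intro i hyp
    rw [K2 i ⟨c i, cmem i⟩ (K1 i).1 (K1 i).2]
    apply min_eq_right
    have hcc : (((⟨c i, cmem i⟩ : Set.Icc (0:ℝ) 1)) : ℝ) = c i := rfl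
    rw [hcc]
    by_cases hA : φ i (t i.castSucc) ≤ m i
    · have hB : m i < φ i (t i.succ) := by
        rcases hyp with h' | h'
        · exact absurd hA (not_le.mpr h')
        · exact h'
      exact (h2b i hA hB).2.1.ge
    · rw [hc1 i hA]; exact (not_le.mp hA).le
  -- certification that m i is a local minimum value of g
  have hcert : ∀ i : Fin n, (m i < φ i (t i.castSucc) ∨ m i < φ i (t i.succ)) →
      ∃ t₀ : Set.Icc (0:ℝ) 1, IsLocalMin g t₀ ∧ g t₀ = m i := by
    intro i hyp
    have hcm := hhc i hyp
    obtain ⟨s', hs'1, hs'2⟩ : ∃ s' : Set.Icc (0:ℝ) 1, c i < (s':ℝ) ∧ g s' = m i := by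
      rcases lt_or_eq_of_le (K1 i).2 with hlt | heq
      · obtain ⟨s', hs', hgs'⟩ := (hh ⟨t i.succ, tmem i.succ⟩).1
        exact ⟨s', lt_of_lt_of_le hlt hs', by rw [hmdef i]; exact hgs'⟩
      · have hA : ¬ φ i (t i.castSucc) ≤ m i := by
          intro hA
          by_cases hB : φ i (t i.succ) ≤ m i
          · rcases hyp with h' | h' <;> linarith
          · have hlt := (h2b i hA (not_le.mp hB)).2.2.2
            linarith [heq ▸ hlt]
        have hceq := hc1 i hA
        obtain ⟨s', hs', hgs'⟩ := (hh ⟨c i, cmem i⟩).1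
        refine ⟨s', lt_of_le_of_ne hs' ?_, by rw [hgs', hcm]⟩
        intro hne
        have hgc : g s' = φ i (c i) := by
          have := hφ i s' (by rw [← hne, hceq]) (by rw [← hne, hceq]; exact htt i)
          rw [this, ← hne]
        rw [hgs', hcm, hceq] at hgc
        exact hA hgc.ge
    refine ⟨s', ?_, hs'2⟩
    have hopen : IsOpen {x : Set.Icc (0:ℝ) 1 | c i < (x:ℝ)} :=
      isOpen_lt continuous_const continuous_subtype_val
    show ∀ᶠ x in nhds s', g s' ≤ g x
    refine Filter.eventually_of_mem (hopen.mem_nhds hs'1) ?_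
    intro x hx
    calc g s' = m i := hs'2
      _ ≤ g x := by rw [← hcm]; exact (hh ⟨c i, cmem i⟩).2 ⟨x, le_of_lt hx, rfl⟩
  -- the two sub-pieces of each original piece
  have hEven : ∀ i : Fin n, ∃ ψ ∈ Fbig, ∀ s : Set.Icc (0:ℝ) 1,
      t i.castSucc ≤ (s:ℝ) → (s:ℝ) ≤ c i → h s = ψ (s:ℝ) := by
    intro i
    by_cases hA : φ i (t i.castSucc) ≤ m i
    · refine ⟨φ i, Set.mem_union_left _ (hφF i), ?_⟩
      intro s hs1 hs2
      have hs2' : (s:ℝ) ≤ t i.succ := le_trans hs2 (K1 i).2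
      rw [K2 i s hs1 hs2']
      apply min_eq_left
      by_cases hB : φ i (t i.succ) ≤ m i
      · rw [hab i]
        calc a i * (s:ℝ) + b i
            ≤ max (a i * t i.castSucc + b i) (a i * t i.succ + b i) :=
              affine_upper _ _ _ _ _ hs1 hs2'
          _ ≤ m i := max_le (by rw [← hab i]; exact hA) (by rw [← hab i]; exact hB)
      · obtain ⟨ha, hφc, _, _⟩ := h2b i hA (not_le.mp hB)
        have hmono' : φ i (s:ℝ) ≤ φ i (c i) := by
          rw [hab i, hab i]; nlinarith
        exact le_trans hmono' hφc.le
    · refine ⟨fun _ => m i,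
        Set.mem_union_right _ ⟨m i, hcert i (Or.inl (not_le.mp hA)), fun _ => rfl⟩, ?_⟩
      intro s hs1 hs2
      rw [K2 i s hs1 (le_trans hs2 (K1 i).2)]
      apply min_eq_right
      have hseq : (s:ℝ) = t i.castSucc := le_antisymm (by rw [← hc1 i hA]; exact hs2) hs1
      rw [hseq]
      exact (not_le.mp hA).le
  have hOdd : ∀ i : Fin n, ∃ ψ ∈ Fbig, ∀ s : Set.Icc (0:ℝ) 1,
      c i ≤ (s:ℝ) → (s:ℝ) ≤ t i.succ → h s = ψ (s:ℝ) := by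
    intro i
    by_cases hA : φ i (t i.castSucc) ≤ m i
    · by_cases hB : φ i (t i.succ) ≤ m i
      · refine ⟨φ i, Set.mem_union_left _ (hφF i), ?_⟩
        intro s hs1 hs2
        have hceq := hc2 i hA hB
        have hseq : (s:ℝ) = t i.succ := le_antisymm hs2 (by rw [← hceq]; exact hs1)
        have hs1' : t i.castSucc ≤ (s:ℝ) := by rw [hseq]; exact htt i
        rw [K2 i s hs1' hs2]
        apply min_eq_left
        rw [hseq]; exact hB
      · obtain ⟨ha, hφc, hK1a, _⟩ := h2b i hA (not_le.mp hB)
        refine ⟨fun _ => m i,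
          Set.mem_union_right _ ⟨m i, hcert i (Or.inr (not_le.mp hB)), fun _ => rfl⟩, ?_⟩
        intro s hs1 hs2
        rw [K2 i s (le_trans hK1a hs1) hs2]
        apply min_eq_right
        rw [← hφc, hab i, hab i]; nlinarith
    · refine ⟨fun _ => m i,
        Set.mem_union_right _ ⟨m i, hcert i (Or.inl (not_le.mp hA)), fun _ => rfl⟩, ?_⟩
      intro s hs1 hs2
      have hs1' : t i.castSucc ≤ (s:ℝ) := by rw [← hc1 i hA]; exact hs1
      rw [K2 i s hs1' hs2]
      apply min_eq_right
      have h1 := affine_lower (a i) (b i) (t i.castSucc) (t i.succ) (s:ℝ) hs1' hs2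
      rw [hab i]
      calc m i ≤ min (a i * t i.castSucc + b i) (a i * t i.succ + b i) :=
            le_min (by rw [← hab i]; exact (not_le.mp hA).le) (by rw [← hab i]; exact hml i)
        _ ≤ _ := h1
  -- assemble the refined partition
  obtain ⟨T, hTdef⟩ : ∃ T : ℕ → ℝ, T = fun j => t ⟨min j n, by omega⟩ := ⟨_, rfl⟩
  obtain ⟨C, hCdef⟩ : ∃ C : ℕ → ℝ, C = fun j => if hj : j < n then c ⟨j, hj⟩ else 0 :=
    ⟨_, rfl⟩
  obtain ⟨U, hUdef⟩ : ∃ U : ℕ → ℝ, U = fun v => if v % 2 = 0 then T (v / 2) else C (v / 2) :=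
    ⟨_, rfl⟩
  have hT : ∀ (j : ℕ) (hj : j < n + 1), T j = t ⟨j, hj⟩ := by
    intro j hj
    have : min j n = j := by omega
    simp only [hTdef, this]
  have hC : ∀ (j : ℕ) (hj : j < n), C j = c ⟨j, hj⟩ := by
    intro j hj; simp only [hCdef]; rw [dif_pos hj]
  have hpw : PiecewiseIn Fbig h := by
    refine ⟨2 * n, fun k => U k.val, ?_, ?_, ?_, ?_⟩
    · -- Monotone
      have step : ∀ v, v < 2 * n → U v ≤ U (v + 1) := by
        intro v hv
        by_cases hv2 : v % 2 = 0
        · have e1 : U v = T (v / 2) := by simp only [hUdef]; rw [if_pos hv2]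
          have e2 : U (v + 1) = C (v / 2) := by
            simp only [hUdef]; rw [if_neg (by omega)]
            congr 1; omega
          rw [e1, e2, hT (v / 2) (by omega), hC (v / 2) (by omega)]
          exact (K1 ⟨v / 2, by omega⟩).1
        · have e1 : U v = C (v / 2) := by simp only [hUdef]; rw [if_neg hv2]
          have e2 : U (v + 1) = T (v / 2 + 1) := by
            simp only [hUdef]; rw [if_pos (by omega)]
            congr 1; omega
          rw [e1, e2, hT (v / 2 + 1) (by omega), hC (v / 2) (by omega)]
          exact (K1 ⟨v / 2, by omega⟩).2
      intro k l hkl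
      have hkl' : k.val ≤ l.val := hkl
      have hgen : ∀ d p, p + d ≤ 2 * n → U p ≤ U (p + d) := by
        intro d
        induction d with
        | zero => intro p _; exact le_refl _
        | succ d ih =>
          intro p hp
          exact le_trans (ih p (by omega)) (step (p + d) (by omega))
      have h2 : k.val + (l.val - k.val) = l.val := by omega
      have := hgen (l.val - k.val) k.val (by have := l.isLt; omega)
      rw [h2] at this
      exact this
    · -- left endpoint
      show U (0 : Fin (2 * n + 1)).val = 0
      have hv0 : (0 : Fin (2 * n + 1)).val = 0 := Fin.val_zero _
      rw [hv0]
      have e : U 0 = T 0 := by simp only [hUdef]; norm_num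
      rw [e, hT 0 (by omega)]
      have : (⟨0, by omega⟩ : Fin (n + 1)) = 0 := Fin.ext (by simp)
      rw [this, ht0]
    · -- right endpoint
      show U (Fin.last (2 * n)).val = 1
      have hvl : (Fin.last (2 * n)).val = 2 * n := Fin.val_last _
      rw [hvl]
      have e : U (2 * n) = T n := by
        simp only [hUdef]; rw [if_pos (by omega)]
        congr 1; omega
      rw [e, hT n (by omega)]
      have : (⟨n, by omega⟩ : Fin (n + 1)) = Fin.last n := Fin.ext (by simp)
      rw [this, ht1]
    · -- the pieces
      intro j
      have ecs : (fun k : Fin (2 * n + 1) => U k.val) j.castSucc = U j.val := by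
        simp [Fin.coe_castSucc]
      have esc : (fun k : Fin (2 * n + 1) => U k.val) j.succ = U (j.val + 1) := by
        simp [Fin.val_succ]
      rw [ecs, esc]
      have hjlt := j.isLt
      by_cases hj2 : j.val % 2 = 0
      · have hi : j.val / 2 < n := by omega
        have e1 : U j.val = T (j.val / 2) := by simp only [hUdef]; rw [if_pos hj2]
        have e2 : U (j.val + 1) = C (j.val / 2) := by
          simp only [hUdef]; rw [if_neg (by omega)]
          congr 1; omega
        rw [e1, e2, hT (j.val / 2) (by omega), hC (j.val / 2) hi]
        exact hEven ⟨j.val / 2, hi⟩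
      · have hi : j.val / 2 < n := by omega
        have e1 : U j.val = C (j.val / 2) := by simp only [hUdef]; rw [if_neg hj2]
        have e2 : U (j.val + 1) = T (j.val / 2 + 1) := by
          simp only [hUdef]; rw [if_pos (by omega)]
          congr 1; omega
        rw [e1, e2, hT (j.val / 2 + 1) (by omega), hC (j.val / 2) hi]
        exact hOdd ⟨j.val / 2, hi⟩
  refine ⟨?_, hmono, hpw⟩
  have hFcont : ∀ ψ ∈ Fbig, Continuous ψ := by
    intro ψ hψ
    rcases hψ with hψ | ⟨v, _, hv⟩
    · obtain ⟨a', b', hab'⟩ := hAff ψ hψ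
      have : ψ = fun x => a' * x + b' := funext hab'
      rw [this]; exact (continuous_const.mul continuous_id).add continuous_const
    · have : ψ = fun _ => v := funext hv
      rw [this]; exact continuous_const
  obtain ⟨n', t', ht', h0', h1', hp'⟩ := hpw
  exact continuous_of_pieces t' ht' h0' h1' h (fun i => by
    obtain ⟨ψ, hψm, hψ⟩ := hp' i
    exact ⟨ψ, hFcont ψ hψm, hψ⟩)
end

section
/- Let F be a finite set of affine functions ℝ → ℝ and let g : [0,1] → ℝ be piecewise in F. Define h : [0,1] → ℝ by h(Δ) = min_{t ∈ [0,Δ]} g(t) (the minimum exists since g is continuous and [0,Δ] is compact). Then h is continuous on [0,1], monotone nonincreasing, and piecewise in F ∪ {constant functions t ↦ v : v is a local minimum value of g relative to [0,1]}. (This is the one-step update Opt_t(Δ) = inf_{0 ≤ Δ' ≤ Δ} Opt_{ℓ'}(Δ') for a Min location in the paper's value iteration on two-clock kernel games.) -/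
/-- Every point of `[0,1]` lies in some piece of a partition. -/
lemma exists_piece_index {n : ℕ} (t : Fin (n+1) → ℝ) (ht : Monotone t)
    (h0 : t 0 = 0) (h1 : t (Fin.last n) = 1) (x : Set.Icc (0:ℝ) 1) :
    ∃ i : Fin n, t i.castSucc ≤ (x:ℝ) ∧ (x:ℝ) ≤ t i.succ := by
  have hn : n ≠ 0 := by
    rintro rfl
    rw [show Fin.last 0 = 0 from rfl, h0] at h1
    norm_num at h1
  classical
  set S : Finset (Fin (n+1)) := Finset.univ.filter (fun j => t j ≤ (x:ℝ)) with hS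
  have hS0 : (0 : Fin (n+1)) ∈ S := by
    simp only [hS, Finset.mem_filter, Finset.mem_univ, true_and, h0]
    exact x.2.1
  have hSne : S.Nonempty := ⟨0, hS0⟩
  set j := S.max' hSne with hj
  have hjx : t j ≤ (x:ℝ) := (Finset.mem_filter.mp (S.max'_mem hSne)).2
  by_cases hjl : j = Fin.last n
  · have hx1 : (x:ℝ) = 1 := by
      rw [hjl, h1] at hjx
      exact le_antisymm x.2.2 hjx
    refine ⟨⟨n-1, by omega⟩, ?_, ?_⟩
    · have ht1 : t (Fin.last n) ≤ (x:ℝ) := by rw [← hjl]; exact hjx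
      exact le_trans (ht (Fin.le_last _)) ht1
    · have : Fin.succ (⟨n-1, by omega⟩ : Fin n) = Fin.last n := by
        apply Fin.ext; simp [Fin.val_succ]; omega
      rw [this, h1, hx1]
  · have hjlt : j.val < n := by
      have := j.isLt
      rcases lt_or_eq_of_le (Nat.lt_succ_iff.mp this) with h | h
      · exact h
      · exact absurd (Fin.ext h) hjl
    refine ⟨⟨j.val, hjlt⟩, ?_, ?_⟩
    · have : Fin.castSucc (⟨j.val, hjlt⟩ : Fin n) = j := by apply Fin.ext; simp
      rw [this]; exact hjx
    · by_contra hcon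
      push_neg at hcon
      have hmem : Fin.succ (⟨j.val, hjlt⟩ : Fin n) ∈ S := by
        simp only [hS, Finset.mem_filter, Finset.mem_univ, true_and]
        exact hcon.le
      have := S.le_max' _ hmem
      rw [← hj] at this
      have h2 : (Fin.succ (⟨j.val, hjlt⟩ : Fin n)).val = j.val + 1 := by simp
      have := Fin.le_iff_val_le_val.mp this
      omega

/-- Interleave partition points with split points. -/
def interleave (n : ℕ) (t : Fin (n+1) → ℝ) (p : Fin n → ℝ) : Fin (2*n+1) → ℝ :=
  fun j => if hj : j.val % 2 = 0
    then t ⟨j.val / 2, by have := j.isLt; omega⟩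
    else p ⟨j.val / 2, by have := j.isLt; omega⟩

lemma interleave_even (n : ℕ) (t : Fin (n+1) → ℝ) (p : Fin n → ℝ)
    (k : ℕ) (hk : k < n+1) :
    interleave n t p ⟨2*k, by omega⟩ = t ⟨k, hk⟩ := by
  unfold interleave
  rw [dif_pos (by omega : (2*k) % 2 = 0)]
  exact congrArg t (Fin.ext (by simp; try omega))

lemma interleave_odd (n : ℕ) (t : Fin (n+1) → ℝ) (p : Fin n → ℝ)
    (k : ℕ) (hk : k < n) :
    interleave n t p ⟨2*k+1, by omega⟩ = p ⟨k, hk⟩ := by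
  unfold interleave
  rw [dif_neg (by omega : ¬ (2*k+1) % 2 = 0)]
  exact congrArg p (Fin.ext (by simp; try omega))

lemma interleave_apply_even (n : ℕ) (t : Fin (n+1) → ℝ) (p : Fin n → ℝ)
    (j : Fin (2*n+1)) (hj : j.val % 2 = 0) :
    interleave n t p j = t ⟨j.val / 2, by have := j.isLt; omega⟩ := dif_pos hj

lemma interleave_apply_odd (n : ℕ) (t : Fin (n+1) → ℝ) (p : Fin n → ℝ)
    (j : Fin (2*n+1)) (hj : ¬ j.val % 2 = 0) :
    interleave n t p j = p ⟨j.val / 2, by have := j.isLt; omega⟩ := dif_neg hj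

/-- The running minimum over `[0, Δ]` of a function piecewise in a finite
family of affine functions is continuous, nonincreasing, and piecewise in the
family enlarged by the constants equal to local minimum values. -/
theorem min_left_update
    (F : Set (ℝ → ℝ)) (hF : F.Finite) (hAff : ∀ φ ∈ F, Affine φ)
    (g : Set.Icc (0:ℝ) 1 → ℝ) (hg : PiecewiseIn F g)
    (h : Set.Icc (0:ℝ) 1 → ℝ)
    (hh : ∀ Δ : Set.Icc (0:ℝ) 1,
      IsLeast {v : ℝ | ∃ t : Set.Icc (0:ℝ) 1, (t : ℝ) ≤ (Δ : ℝ) ∧ g t = v} (h Δ)) :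
    Continuous h ∧ Antitone h ∧
      PiecewiseIn (F ∪ {φ : ℝ → ℝ | ∃ v : ℝ,
        (∃ t₀ : Set.Icc (0:ℝ) 1, IsLocalMin g t₀ ∧ g t₀ = v) ∧
        ∀ t : ℝ, φ t = v}) h := by
  classical
  obtain ⟨n, t, htm, ht0, ht1, hpc⟩ := hg
  set F' := F ∪ {φ : ℝ → ℝ | ∃ v : ℝ,
      (∃ t₀ : Set.Icc (0:ℝ) 1, IsLocalMin g t₀ ∧ g t₀ = v) ∧
      ∀ t : ℝ, φ t = v} with hF'
  have hmem : ∀ Δ : Set.Icc (0:ℝ) 1, ∃ u : Set.Icc (0:ℝ) 1,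
      (u:ℝ) ≤ (Δ:ℝ) ∧ g u = h Δ := fun Δ => (hh Δ).1
  have hlb : ∀ (Δ u : Set.Icc (0:ℝ) 1), (u:ℝ) ≤ (Δ:ℝ) → h Δ ≤ g u :=
    fun Δ u hu => (hh Δ).2 ⟨u, hu, rfl⟩
  have hanti : Antitone h := by
    intro x y hxy
    obtain ⟨u, hu, hgu⟩ := hmem x
    calc h y ≤ g u := hlb y u (le_trans hu hxy)
      _ = h x := hgu
  have hTmem : ∀ j : Fin (n+1), t j ∈ Set.Icc (0:ℝ) 1 := by
    intro j
    constructor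
    · rw [← ht0]; exact htm (Fin.zero_le j)
    · rw [← ht1]; exact htm (Fin.le_last j)
  have hlocmin : ∀ (Δ u : Set.Icc (0:ℝ) 1), (u:ℝ) < (Δ:ℝ) → g u = h Δ → IsLocalMin g u := by
    intro Δ u hu hgu
    have hopen : IsOpen {y : Set.Icc (0:ℝ) 1 | (y:ℝ) < (Δ:ℝ)} :=
      isOpen_lt continuous_subtype_val continuous_const
    refine Filter.eventually_of_mem (hopen.mem_nhds hu) ?_
    intro y hy
    rw [hgu]
    exact hlb Δ y (le_of_lt hy)
  have hC' : ∀ x : Set.Icc (0:ℝ) 1, ∃ φ ∈ F', h x = φ (x:ℝ) := by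
    intro x
    obtain ⟨u, hu, hgu⟩ := hmem x
    rcases lt_or_eq_of_le hu with hlt | heq
    · exact ⟨fun _ => h x, Or.inr ⟨h x, ⟨u, hlocmin x u hlt hgu, hgu⟩, fun _ => rfl⟩, rfl⟩
    · obtain ⟨i, hi1, hi2⟩ := exists_piece_index t htm ht0 ht1 x
      obtain ⟨φ, hφF, hφ⟩ := hpc i
      refine ⟨φ, Or.inl hφF, ?_⟩
      have hux : u = x := Subtype.ext heq
      rw [← hgu, hux]
      exact hφ x hi1 hi2
  have hCst : ∀ (Δ₁ Δ₂ : Set.Icc (0:ℝ) 1), (Δ₁:ℝ) ≤ (Δ₂:ℝ) → h Δ₁ = h Δ₂ →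
      ∃ φ ∈ F', ∀ s : Set.Icc (0:ℝ) 1, (Δ₁:ℝ) ≤ (s:ℝ) → (s:ℝ) ≤ (Δ₂:ℝ) → h s = φ (s:ℝ) := by
    intro Δ₁ Δ₂ hle heq
    rcases eq_or_lt_of_le hle with he | hlt
    · obtain ⟨φ, hφ, hval⟩ := hC' Δ₁
      refine ⟨φ, hφ, ?_⟩
      intro s hs1 hs2
      have hs2' : (s:ℝ) ≤ (Δ₁:ℝ) := by rw [he]; exact hs2
      have : s = Δ₁ := Subtype.ext (le_antisymm hs2' hs1)
      rw [this]; exact hval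
    · obtain ⟨u, hu, hgu⟩ := hmem Δ₁
      have hlm : IsLocalMin g u := hlocmin Δ₂ u (lt_of_le_of_lt hu hlt) (by rw [hgu, heq])
      refine ⟨fun _ => h Δ₁, Or.inr ⟨h Δ₁, ⟨u, hlm, hgu⟩, fun _ => rfl⟩, ?_⟩
      intro s hs1 hs2
      have h1 : h s ≤ h Δ₁ := hanti (show Δ₁ ≤ s from hs1)
      have h2 : h Δ₂ ≤ h s := hanti (show s ≤ Δ₂ from hs2)
      have := heq
      linarith
  have hsplit : ∀ i : Fin n, ∃ qi : ℝ, t i.castSucc ≤ qi ∧ qi ≤ t i.succ ∧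
      (∃ φ ∈ F', ∀ s : Set.Icc (0:ℝ) 1, t i.castSucc ≤ (s:ℝ) → (s:ℝ) ≤ qi → h s = φ (s:ℝ)) ∧
      (∃ φ ∈ F', ∀ s : Set.Icc (0:ℝ) 1, qi ≤ (s:ℝ) → (s:ℝ) ≤ t i.succ → h s = φ (s:ℝ)) := by
    intro i
    obtain ⟨φ, hφF, hφ⟩ := hpc i
    obtain ⟨a, b, hab⟩ := hAff φ hφF
    have hαβ : t i.castSucc ≤ t i.succ := htm (Fin.castSucc_lt_succ : i.castSucc < i.succ).le
    set α := t i.castSucc with hα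
    set β := t i.succ with hβ
    set Tα : Set.Icc (0:ℝ) 1 := ⟨α, hTmem _⟩ with hTα
    set Tβ : Set.Icc (0:ℝ) 1 := ⟨β, hTmem _⟩ with hTβ
    set c := h Tα with hc
    have hgα : g Tα = a * α + b := by rw [hφ Tα le_rfl hαβ, hab]
    have hcgα : c ≤ a * α + b := by rw [← hgα]; exact hlb Tα Tα le_rfl
    by_cases ha : 0 ≤ a
    · have hconst : h Tβ = c := by
        refine le_antisymm (hanti (show Tα ≤ Tβ from hαβ)) ?_
        obtain ⟨u, hu, hgu⟩ := hmem Tβ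
        rw [← hgu]
        by_cases huα : (u:ℝ) ≤ α
        · exact hlb Tα u huα
        · push_neg at huα
          rw [hφ u huα.le hu, hab]
          have := mul_le_mul_of_nonneg_left huα.le ha
          linarith
      refine ⟨β, hαβ, le_rfl, hCst Tα Tβ hαβ hconst.symm, ?_⟩
      exact hCst Tβ Tβ le_rfl rfl
    · push_neg at ha
      set r := (c - b)/a with hr
      have hra : a * r + b = c := by have hane : a ≠ 0 := ne_of_lt ha; rw [hr]; field_simp [hane]; ring
      set qi := max α (min β r) with hq
      have hq1 : α ≤ qi := le_max_left _ _
      have hq2 : qi ≤ β := max_le hαβ (min_le_left _ _)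
      have hqmem : qi ∈ Set.Icc (0:ℝ) 1 :=
        ⟨le_trans (hTmem i.castSucc).1 hq1, le_trans hq2 (hTmem i.succ).2⟩
      set Q : Set.Icc (0:ℝ) 1 := ⟨qi, hqmem⟩ with hQ
      have hhQ : h Q = c := by
        refine le_antisymm (hanti (show Tα ≤ Q from hq1)) ?_
        obtain ⟨u, hu, hgu⟩ := hmem Q
        rw [← hgu]
        by_cases huα : (u:ℝ) ≤ α
        · exact hlb Tα u huα
        · push_neg at huα
          have hur : (u:ℝ) ≤ r := by
            have h' : (u:ℝ) ≤ max α (min β r) := hu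
            rcases le_max_iff.mp h' with h'' | h''
            · linarith
            · exact le_trans h'' (min_le_right _ _)
          have huβ : (u:ℝ) ≤ β := le_trans hu hq2
          rw [hφ u huα.le huβ, hab]
          have := mul_le_mul_of_nonpos_left hur ha.le
          linarith
      refine ⟨qi, hq1, hq2, hCst Tα Q (show (Tα:ℝ) ≤ (Q:ℝ) from hq1) hhQ.symm, ?_⟩
      rcases eq_or_lt_of_le hq2 with hqβ | hqβ
      · obtain ⟨φ', hφ', hval⟩ := hC' Q
        refine ⟨φ', hφ', ?_⟩
        intro s hs1 hs2
        have hs2' : (s:ℝ) ≤ qi := by rw [hqβ]; exact hs2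
        have : s = Q := Subtype.ext (le_antisymm hs2' hs1)
        rw [this]; exact hval
      · have hrq : r ≤ qi := by
          have h1 : min β r ≤ qi := le_max_right _ _
          have h2 : min β r < β := lt_of_le_of_lt h1 hqβ
          rcases min_cases β r with ⟨he, _⟩ | ⟨he, _⟩
          · rw [he] at h2; exact absurd h2 (lt_irrefl β)
          · rw [← he]; exact h1
        refine ⟨φ, Or.inl hφF, ?_⟩
        intro s hs1 hs2
        have hαs : α ≤ (s:ℝ) := le_trans hq1 hs1
        have hgs : g s = φ (s:ℝ) := hφ s hαs hs2
        refine le_antisymm ?_ ?_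
        · rw [← hgs]; exact hlb s s le_rfl
        · obtain ⟨u, hu, hgu⟩ := hmem s
          rw [← hgu, hab]
          by_cases huα : (u:ℝ) ≤ α
          · have h1 : c ≤ g u := hlb Tα u huα
            have hrs : r ≤ (s:ℝ) := le_trans hrq hs1
            have h2 : a * (s:ℝ) ≤ a * r := mul_le_mul_of_nonpos_left hrs ha.le
            linarith
          · push_neg at huα
            have huβ : (u:ℝ) ≤ β := le_trans hu hs2
            rw [hφ u huα.le huβ, hab]
            have := mul_le_mul_of_nonpos_left hu ha.le
            linarith
  choose q hq1 hq2 hq3 hq4 using hsplit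
  have hPW : PiecewiseIn F' h := by
    refine ⟨2*n, interleave n t q, ?_, ?_, ?_, ?_⟩
    · rw [Fin.monotone_iff_le_succ]
      intro j
      by_cases hpar : j.val % 2 = 0
      · have hkn : j.val / 2 < n := by have := j.isLt; omega
        have e1 : interleave n t q j.castSucc =
            t ⟨j.castSucc.val / 2, by simp only [Fin.coe_castSucc]; have := j.isLt; omega⟩ :=
          interleave_apply_even n t q j.castSucc (by simp only [Fin.coe_castSucc]; try omega)
        have e2 : interleave n t q j.succ =
            q ⟨j.succ.val / 2, by simp only [Fin.val_succ]; have := j.isLt; omega⟩ :=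
          interleave_apply_odd n t q j.succ (by simp only [Fin.val_succ]; try omega)
        rw [e1, e2]
        have e3 : (⟨j.castSucc.val / 2, by simp only [Fin.coe_castSucc]; have := j.isLt; omega⟩ : Fin (n+1)) =
            Fin.castSucc ⟨j.val / 2, hkn⟩ := Fin.ext (by simp only [Fin.coe_castSucc]; try omega)
        have e4 : (⟨j.succ.val / 2, by simp only [Fin.val_succ]; have := j.isLt; omega⟩ : Fin n) =
            ⟨j.val / 2, hkn⟩ := Fin.ext (by simp only [Fin.val_succ]; try omega)
        rw [e3, e4]
        exact hq1 _
      · have hkn : j.val / 2 < n := by have := j.isLt; omega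
        have e1 : interleave n t q j.castSucc =
            q ⟨j.castSucc.val / 2, by simp only [Fin.coe_castSucc]; have := j.isLt; omega⟩ :=
          interleave_apply_odd n t q j.castSucc (by simp only [Fin.coe_castSucc]; try omega)
        have e2 : interleave n t q j.succ =
            t ⟨j.succ.val / 2, by simp only [Fin.val_succ]; have := j.isLt; omega⟩ :=
          interleave_apply_even n t q j.succ (by simp only [Fin.val_succ]; try omega)
        rw [e1, e2]
        have e3 : (⟨j.castSucc.val / 2, by simp only [Fin.coe_castSucc]; have := j.isLt; omega⟩ : Fin n) =
            ⟨j.val / 2, hkn⟩ := Fin.ext (by simp only [Fin.coe_castSucc]; try omega)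
        have e4 : (⟨j.succ.val / 2, by simp only [Fin.val_succ]; have := j.isLt; omega⟩ : Fin (n+1)) =
            Fin.succ ⟨j.val / 2, hkn⟩ := Fin.ext (by simp only [Fin.val_succ]; try omega)
        rw [e3, e4]
        exact hq2 _
    · have e1 : interleave n t q 0 = t ⟨(0 : Fin (2*n+1)).val / 2, by simp only [Fin.val_zero]; try omega⟩ :=
        interleave_apply_even n t q 0 (by simp only [Fin.val_zero]; try omega)
      rw [e1]
      have e2 : (⟨(0 : Fin (2*n+1)).val / 2, by simp only [Fin.val_zero]; try omega⟩ : Fin (n+1)) = 0 :=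
        Fin.ext (by simp only [Fin.val_zero]; try omega)
      rw [e2]; exact ht0
    · have e1 : interleave n t q (Fin.last (2*n)) =
          t ⟨(Fin.last (2*n)).val / 2, by simp only [Fin.val_last]; try omega⟩ :=
        interleave_apply_even n t q _ (by simp only [Fin.val_last]; try omega)
      rw [e1]
      have e2 : (⟨(Fin.last (2*n)).val / 2, by simp only [Fin.val_last]; try omega⟩ : Fin (n+1)) = Fin.last n :=
        Fin.ext (by simp only [Fin.val_last]; try omega)
      rw [e2]; exact ht1
    · intro j
      by_cases hpar : j.val % 2 = 0
      · have hkn : j.val / 2 < n := by have := j.isLt; omega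
        obtain ⟨φ, hφ, hval⟩ := hq3 ⟨j.val / 2, hkn⟩
        refine ⟨φ, hφ, ?_⟩
        intro s hs1 hs2
        have e1 : interleave n t q j.castSucc = t (Fin.castSucc ⟨j.val / 2, hkn⟩) := by
          rw [interleave_apply_even n t q j.castSucc (by simp only [Fin.coe_castSucc]; try omega)]
          exact congrArg t (Fin.ext (by simp only [Fin.coe_castSucc]; try omega))
        have e2 : interleave n t q j.succ = q ⟨j.val / 2, hkn⟩ := by
          rw [interleave_apply_odd n t q j.succ (by simp only [Fin.val_succ]; try omega)]
          exact congrArg q (Fin.ext (by simp only [Fin.val_succ]; try omega))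
        rw [e1] at hs1
        rw [e2] at hs2
        exact hval s hs1 hs2
      · have hkn : j.val / 2 < n := by have := j.isLt; omega
        obtain ⟨φ, hφ, hval⟩ := hq4 ⟨j.val / 2, hkn⟩
        refine ⟨φ, hφ, ?_⟩
        intro s hs1 hs2
        have e1 : interleave n t q j.castSucc = q ⟨j.val / 2, hkn⟩ := by
          rw [interleave_apply_odd n t q j.castSucc (by simp only [Fin.coe_castSucc]; try omega)]
          exact congrArg q (Fin.ext (by simp only [Fin.coe_castSucc]; try omega))
        have e2 : interleave n t q j.succ = t (Fin.succ ⟨j.val / 2, hkn⟩) := by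
          rw [interleave_apply_even n t q j.succ (by simp only [Fin.val_succ]; try omega)]
          exact congrArg t (Fin.ext (by simp only [Fin.val_succ]; try omega))
        rw [e1] at hs1
        rw [e2] at hs2
        exact hval s hs1 hs2
  have hFcont : ∀ φ ∈ F', Continuous φ := by
    intro φ hφ
    rcases hφ with hφ | hφ
    · obtain ⟨a, b, hab⟩ := hAff φ hφ
      have : φ = fun s => a*s+b := funext hab
      rw [this]
      exact (continuous_const.mul continuous_id).add continuous_const
    · obtain ⟨v, _, hv⟩ := hφ
      have : φ = fun _ => v := funext hv
      rw [this]; exact continuous_const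
  have hcont : Continuous h := by
    obtain ⟨m, u, hum, hu0, hu1, hupc⟩ := hPW
    refine (locallyFinite_of_finite
      (fun i : Fin m => {x : Set.Icc (0:ℝ) 1 | u i.castSucc ≤ (x:ℝ) ∧ (x:ℝ) ≤ u i.succ})).continuous
      ?_ ?_ ?_
    · ext x
      simp only [Set.mem_iUnion, Set.mem_univ, iff_true, Set.mem_setOf_eq]
      exact exists_piece_index u hum hu0 hu1 x
    · intro i
      have : {x : Set.Icc (0:ℝ) 1 | u i.castSucc ≤ (x:ℝ) ∧ (x:ℝ) ≤ u i.succ} =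
          (fun x : Set.Icc (0:ℝ) 1 => (x:ℝ)) ⁻¹' (Set.Icc (u i.castSucc) (u i.succ)) := rfl
      rw [this]
      exact isClosed_Icc.preimage continuous_subtype_val
    · intro i
      obtain ⟨φ, hφ, hv⟩ := hupc i
      exact ContinuousOn.congr ((hFcont φ hφ).comp continuous_subtype_val).continuousOn
        (fun x hx => hv x hx.1 hx.2)
  exact ⟨hcont, hanti, hPW⟩
end

section
/- Let F be a finite set of affine functions ℝ → ℝ and let g : [0,1] → ℝ be piecewise in F. Define h : [0,1] → ℝ by h(Δ) = max_{t ∈ [Δ,1]} g(t) (the maximum exists since g is continuous and [Δ,1] is compact). Then h is continuous on [0,1], monotone nonincreasing, and piecewise in F ∪ {constant functions t ↦ v : v is a local maximum value of g relative to [0,1]}. (This is the one-step update Opt_t(Δ) = sup_{Δ ≤ Δ' ≤ 1} Opt_{ℓ'}(Δ') for a Max location in the paper's value iteration on two-clock kernel games.) -/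
lemma continuousOn_union_closed {X Y : Type*} [TopologicalSpace X] [TopologicalSpace Y]
    {s t : Set X} {f : X → Y} (hsc : IsClosed s) (htc : IsClosed t)
    (hs : ContinuousOn f s) (ht : ContinuousOn f t) : ContinuousOn f (s ∪ t) := by
  intro x hx
  apply ContinuousWithinAt.union
  · by_cases hxs : x ∈ s
    · exact hs x hxs
    · exact continuousWithinAt_of_notMem_closure (by rwa [hsc.closure_eq])
  · by_cases hxt : x ∈ t
    · exact ht x hxt
    · exact continuousWithinAt_of_notMem_closure (by rwa [htc.closure_eq])

lemma pw_continuous {F : Set (ℝ → ℝ)} (hF : ∀ φ ∈ F, Continuous φ)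
    {f : Set.Icc (0:ℝ) 1 → ℝ} (hf : PiecewiseIn F f) : Continuous f := by
  obtain ⟨m, u, humono, hu0, hulast, hup⟩ := hf
  have hA : ∀ k : ℕ, ∀ hk : k ≤ m,
      ContinuousOn f {s : Set.Icc (0:ℝ) 1 | (s:ℝ) ≤ u ⟨k, Nat.lt_succ_of_le hk⟩} := by
    intro k
    induction k with
    | zero =>
      intro hk
      have h0 : u ⟨0, Nat.lt_succ_of_le hk⟩ = 0 := by
        have he : (⟨0, Nat.lt_succ_of_le hk⟩ : Fin (m+1)) = 0 := by ext; simp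
        rw [he, hu0]
      refine (continuousOn_singleton f ⟨0, by norm_num⟩).mono ?_
      intro s hs
      simp only [Set.mem_setOf_eq, h0] at hs
      have h0' : (s:ℝ) = 0 := le_antisymm hs s.2.1
      exact Set.mem_singleton_iff.mpr (Subtype.ext h0')
    | succ k ih =>
      intro hk
      have hk' : k ≤ m := Nat.le_of_succ_le hk
      have hkm : k < m := hk
      obtain ⟨φ, hφF, hφ⟩ := hup ⟨k, hkm⟩
      have hBcont : ContinuousOn f
          {s : Set.Icc (0:ℝ) 1 | u ⟨k, Nat.lt_succ_of_le hk'⟩ ≤ (s:ℝ) ∧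
            (s:ℝ) ≤ u ⟨k+1, Nat.lt_succ_of_le hk⟩} := by
        apply ContinuousOn.congr (((hF φ hφF).comp continuous_subtype_val).continuousOn)
        intro s hs
        exact hφ s hs.1 hs.2
      have hsub : {s : Set.Icc (0:ℝ) 1 | (s:ℝ) ≤ u ⟨k+1, Nat.lt_succ_of_le hk⟩} =
          {s : Set.Icc (0:ℝ) 1 | (s:ℝ) ≤ u ⟨k, Nat.lt_succ_of_le hk'⟩} ∪
          {s : Set.Icc (0:ℝ) 1 | u ⟨k, Nat.lt_succ_of_le hk'⟩ ≤ (s:ℝ) ∧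
            (s:ℝ) ≤ u ⟨k+1, Nat.lt_succ_of_le hk⟩} := by
        ext s
        simp only [Set.mem_setOf_eq, Set.mem_union]
        constructor
        · intro hle
          rcases le_total (s:ℝ) (u ⟨k, Nat.lt_succ_of_le hk'⟩) with hc | hc
          · exact Or.inl hc
          · exact Or.inr ⟨hc, hle⟩
        · rintro (hc | hc)
          · exact hc.trans (humono (by simp [Fin.le_def]))
          · exact hc.2
      rw [hsub]
      have hc1 : IsClosed {s : Set.Icc (0:ℝ) 1 | (s:ℝ) ≤ u ⟨k, Nat.lt_succ_of_le hk'⟩} :=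
        isClosed_Iic.preimage continuous_subtype_val
      have hc2 : IsClosed {s : Set.Icc (0:ℝ) 1 | u ⟨k, Nat.lt_succ_of_le hk'⟩ ≤ (s:ℝ) ∧
          (s:ℝ) ≤ u ⟨k+1, Nat.lt_succ_of_le hk⟩} :=
        (isClosed_Ici.preimage continuous_subtype_val).inter
          (isClosed_Iic.preimage continuous_subtype_val)
      exact continuousOn_union_closed hc1 hc2 (ih hk') hBcont
  have hlast : u ⟨m, Nat.lt_succ_of_le le_rfl⟩ = 1 := by
    have he : (⟨m, Nat.lt_succ_of_le le_rfl⟩ : Fin (m+1)) = Fin.last m := rfl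
    rw [he, hulast]
  rw [← continuousOn_univ]
  refine (hA m le_rfl).mono ?_
  intro s _
  simp only [Set.mem_setOf_eq, hlast]
  exact s.2.2
/-- The running maximum over `[Δ, 1]` of a function piecewise in a finite
family of affine functions is continuous, nonincreasing, and piecewise in the
family enlarged by the constants equal to local maximum values. -/
theorem max_right_update
    (F : Set (ℝ → ℝ)) (hF : F.Finite) (hAff : ∀ φ ∈ F, Affine φ)
    (g : Set.Icc (0:ℝ) 1 → ℝ) (hg : PiecewiseIn F g)
    (h : Set.Icc (0:ℝ) 1 → ℝ)
    (hh : ∀ Δ : Set.Icc (0:ℝ) 1,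
      IsGreatest {v : ℝ | ∃ t : Set.Icc (0:ℝ) 1, (Δ : ℝ) ≤ (t : ℝ) ∧ g t = v} (h Δ)) :
    Continuous h ∧ Antitone h ∧
      PiecewiseIn (F ∪ {φ : ℝ → ℝ | ∃ v : ℝ,
        (∃ t₀ : Set.Icc (0:ℝ) 1, IsLocalMax g t₀ ∧ g t₀ = v) ∧
        ∀ t : ℝ, φ t = v}) h := by
  classical
  set F' := F ∪ {φ : ℝ → ℝ | ∃ v : ℝ,
        (∃ t₀ : Set.Icc (0:ℝ) 1, IsLocalMax g t₀ ∧ g t₀ = v) ∧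
        ∀ t : ℝ, φ t = v} with hF'def
  have hub : ∀ (Δ s : Set.Icc (0:ℝ) 1), (Δ:ℝ) ≤ (s:ℝ) → g s ≤ h Δ :=
    fun Δ s hs => (hh Δ).2 ⟨s, hs, rfl⟩
  have hge : ∀ Δ, g Δ ≤ h Δ := fun Δ => hub Δ Δ le_rfl
  have hanti : Antitone h := by
    intro Δ₁ Δ₂ h12
    obtain ⟨t₀, ht1, ht2⟩ := (hh Δ₂).1
    rw [← ht2]
    exact hub Δ₁ t₀ (le_trans (Subtype.coe_le_coe.mpr h12) ht1)
  have hlm : ∀ (Δ t₀ : Set.Icc (0:ℝ) 1), (Δ:ℝ) < (t₀:ℝ) → g t₀ = h Δ → IsLocalMax g t₀ := by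
    intro Δ t₀ hlt hgt
    have hopen : IsOpen {s : Set.Icc (0:ℝ) 1 | (Δ:ℝ) < (s:ℝ)} :=
      isOpen_Ioi.preimage continuous_subtype_val
    refine Filter.eventually_of_mem (hopen.mem_nhds hlt) ?_
    intro s hs
    rw [hgt]
    exact hub Δ s (le_of_lt hs)
  have hpoint : ∀ Δ : Set.Icc (0:ℝ) 1,
      h Δ = g Δ ∨ ∃ t₀, IsLocalMax g t₀ ∧ g t₀ = h Δ := by
    intro Δ
    obtain ⟨t₀, hΔt, hgt⟩ := (hh Δ).1
    rcases eq_or_lt_of_le hΔt with heq | hlt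
    · left; rw [← hgt]; exact (congrArg g (Subtype.ext heq)).symm
    · exact Or.inr ⟨t₀, hlm Δ t₀ hlt hgt, hgt⟩
  obtain ⟨n, t, htmono, ht0, htlast, hpiece⟩ := hg
  have hn : 0 < n := by
    rcases Nat.eq_zero_or_pos n with h0 | h0
    · subst h0
      rw [show (Fin.last 0) = 0 from rfl, ht0] at htlast
      norm_num at htlast
    · exact h0
  have ht01 : ∀ i : Fin (n+1), 0 ≤ t i ∧ t i ≤ 1 := fun i =>
    ⟨ht0 ▸ htmono (Fin.zero_le i), htlast ▸ htmono (Fin.le_last i)⟩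
  have key : ∀ i : Fin n, ∃ c, t i.castSucc ≤ c ∧ c ≤ t i.succ ∧
      ∃ φ₁ ∈ F', ∃ φ₂ ∈ F',
        (∀ s : Set.Icc (0:ℝ) 1, t i.castSucc ≤ (s:ℝ) → (s:ℝ) ≤ c → h s = φ₁ (s:ℝ)) ∧
        (∀ s : Set.Icc (0:ℝ) 1, c ≤ (s:ℝ) → (s:ℝ) ≤ t i.succ → h s = φ₂ (s:ℝ)) := by
    intro i
    obtain ⟨φ, hφF, hφ⟩ := hpiece i
    obtain ⟨a, b, hab⟩ := hAff φ hφF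
    set p := t i.castSucc with hp
    set q := t i.succ with hq
    have hpq : p ≤ q := htmono (Fin.castSucc_lt_succ : i.castSucc < i.succ).le
    have hp0 : 0 ≤ p := (ht01 _).1
    have hq1 : q ≤ 1 := (ht01 _).2
    set P : Set.Icc (0:ℝ) 1 := ⟨p, hp0, hpq.trans hq1⟩ with hPdef
    set Q : Set.Icc (0:ℝ) 1 := ⟨q, hp0.trans hpq, hq1⟩ with hQdef
    have hconstMem : ∀ (t₀ : Set.Icc (0:ℝ) 1) (v : ℝ), IsLocalMax g t₀ → g t₀ = v →
        (fun _ : ℝ => v) ∈ F' := fun t₀ v hloc hv =>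
      Set.mem_union_right _ ⟨v, ⟨t₀, hloc, hv⟩, fun _ => rfl⟩
    rcases eq_or_lt_of_le hpq with heq | hplt
    · -- degenerate piece: p = q
      have hsingle : ∀ s : Set.Icc (0:ℝ) 1, p ≤ (s:ℝ) → (s:ℝ) ≤ q → s = P :=
        fun s h1 h2 => Subtype.ext (le_antisymm (h2.trans heq.ge) h1)
      rcases hpoint P with hgP | ⟨t₀, hloc, hval⟩
      · refine ⟨q, hpq, le_rfl, φ, Set.mem_union_left _ hφF, φ, Set.mem_union_left _ hφF, ?_, ?_⟩
        · intro s h1 h2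
          rw [hsingle s h1 h2, hgP]
          exact hφ P le_rfl hpq
        · intro s h1 h2
          rw [hsingle s (heq.trans_le h1) h2, hgP]
          exact hφ P le_rfl hpq
      · refine ⟨q, hpq, le_rfl, (fun _ => h P), hconstMem t₀ (h P) hloc hval,
          (fun _ => h P), hconstMem t₀ (h P) hloc hval, ?_, ?_⟩
        · intro s h1 h2; rw [hsingle s h1 h2]
        · intro s h1 h2; rw [hsingle s (heq.trans_le h1) h2]
    · -- p < q
      rcases le_or_gt a 0 with ha | ha
      · -- nonincreasing slope
        have hmax : ∀ s : Set.Icc (0:ℝ) 1, p ≤ (s:ℝ) → (s:ℝ) ≤ q →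
            h s = max (φ (s:ℝ)) (h Q) := by
          intro s h1 h2
          apply le_antisymm
          · obtain ⟨t₀, hst, hgt⟩ := (hh s).1
            rcases le_or_gt (t₀:ℝ) q with h3 | h3
            · rw [← hgt, hφ t₀ (h1.trans hst) h3]
              have hmono : φ (t₀:ℝ) ≤ φ (s:ℝ) := by
                rw [hab, hab]; nlinarith
              exact hmono.trans (le_max_left _ _)
            · rw [← hgt]
              exact (hub Q t₀ h3.le).trans (le_max_right _ _)
          · refine max_le ?_ ?_
            · rw [← hφ s h1 h2]; exact hge s
            · exact hanti (Subtype.coe_le_coe.mp h2)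
        rcases le_or_gt (φ p) (h Q) with hpM | hpM
        · -- constant piece
          have hconst : ∀ s : Set.Icc (0:ℝ) 1, p ≤ (s:ℝ) → (s:ℝ) ≤ q → h s = h Q := by
            intro s h1 h2
            rw [hmax s h1 h2, max_eq_right (by rw [hab] at hpM ⊢; nlinarith)]
          obtain ⟨t₀, hQt, hgt⟩ := (hh Q).1
          have hloc : IsLocalMax g t₀ :=
            hlm P t₀ (lt_of_lt_of_le hplt hQt) (hgt.trans (hconst P le_rfl hpq).symm)
          refine ⟨p, le_rfl, hpq, (fun _ => h Q), hconstMem t₀ (h Q) hloc hgt,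
            (fun _ => h Q), hconstMem t₀ (h Q) hloc hgt, ?_, ?_⟩
          · intro s h1 h2; exact hconst s h1 (h2.trans hpq)
          · intro s h1 h2; exact hconst s h1 h2
        · rcases le_or_gt (h Q) (φ q) with hqM | hqM
          · -- affine piece throughout
            refine ⟨q, hpq, le_rfl, φ, Set.mem_union_left _ hφF, φ,
              Set.mem_union_left _ hφF, ?_, ?_⟩
            · intro s h1 h2
              rw [hmax s h1 h2, max_eq_left (by rw [hab] at hqM ⊢; nlinarith)]
            · intro s h1 h2
              have hs : (s:ℝ) = q := le_antisymm h2 h1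
              rw [hmax s (hpq.trans h1) h2,
                max_eq_left (by rw [hab] at hqM ⊢; rw [hs]; linarith)]
          · -- crossing
            have ha' : a < 0 := by rw [hab] at hpM hqM; nlinarith
            set c := (h Q - b) / a with hc
            have ha0 : a ≠ 0 := ne_of_lt ha'
            have hcM : a * c + b = h Q := by
              rw [hc]; field_simp; ring
            have hpc : p < c := by rw [hab] at hpM; nlinarith
            have hcq : c < q := by rw [hab] at hqM; nlinarith
            set Cpt : Set.Icc (0:ℝ) 1 := ⟨c, hp0.trans hpc.le, hcq.le.trans hq1⟩ with hCdef
            have hhC : h Cpt = h Q := by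
              rw [hmax Cpt hpc.le hcq.le]
              simp only [hCdef]
              rw [hab, hcM, max_self]
            obtain ⟨t₀, hQt, hgt⟩ := (hh Q).1
            have hloc : IsLocalMax g t₀ :=
              hlm Cpt t₀ (lt_of_lt_of_le hcq hQt) (hgt.trans hhC.symm)
            refine ⟨c, hpc.le, hcq.le, φ, Set.mem_union_left _ hφF,
              (fun _ => h Q), hconstMem t₀ (h Q) hloc hgt, ?_, ?_⟩
            · intro s h1 h2
              rw [hmax s h1 (h2.trans hcq.le), max_eq_left (by rw [hab]; nlinarith)]
            · intro s h1 h2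
              rw [hmax s (hpc.le.trans h1) h2, max_eq_right (by rw [hab]; nlinarith)]
      · -- increasing slope: constant piece
        have hconst : ∀ s : Set.Icc (0:ℝ) 1, p ≤ (s:ℝ) → (s:ℝ) ≤ q → h s = h Q := by
          intro s h1 h2
          apply le_antisymm
          · obtain ⟨t₀, hst, hgt⟩ := (hh s).1
            rcases le_or_gt (t₀:ℝ) q with h3 | h3
            · rw [← hgt, hφ t₀ (h1.trans hst) h3]
              calc φ (t₀:ℝ) ≤ φ q := by rw [hab, hab]; nlinarith
                _ = g Q := (hφ Q hpq le_rfl).symm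
                _ ≤ h Q := hge Q
            · rw [← hgt]; exact hub Q t₀ h3.le
          · exact hanti (Subtype.coe_le_coe.mp h2)
        obtain ⟨t₀, hQt, hgt⟩ := (hh Q).1
        have hloc : IsLocalMax g t₀ :=
          hlm P t₀ (lt_of_lt_of_le hplt hQt) (hgt.trans (hconst P le_rfl hpq).symm)
        refine ⟨p, le_rfl, hpq, (fun _ => h Q), hconstMem t₀ (h Q) hloc hgt,
          (fun _ => h Q), hconstMem t₀ (h Q) hloc hgt, ?_, ?_⟩
        · intro s h1 h2; exact hconst s h1 (h2.trans hpq)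
        · intro s h1 h2; exact hconst s h1 h2
  choose c hc1 hc2 φ₁ hm1 φ₂ hm2 hL hR using key
  -- build the partition for h
  set T : ℕ → ℝ := fun m => t ⟨min m n, Nat.lt_succ_of_le (min_le_right _ _)⟩ with hT
  set C : ℕ → ℝ := fun m => c ⟨min m (n-1), by omega⟩ with hC
  set v : ℕ → ℝ := fun k => if k % 2 = 0 then T (k/2) else C (k/2) with hv
  have hTeq : ∀ m (hm : m ≤ n), T m = t ⟨m, Nat.lt_succ_of_le hm⟩ := by
    intro m hm
    simp only [hT]
    exact congrArg t (Fin.ext (by simp [min_eq_left hm]))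
  have hCeq : ∀ m (hm : m < n), C m = c ⟨m, hm⟩ := by
    intro m hm
    simp only [hC]
    exact congrArg c (Fin.ext (by simp; omega))
  have hv_even : ∀ m : ℕ, v (2*m) = T m := by
    intro m
    simp only [hv]
    rw [if_pos (by omega)]
    congr 1
    omega
  have hv_odd : ∀ m : ℕ, v (2*m+1) = C m := by
    intro m
    simp only [hv]
    rw [if_neg (by omega)]
    congr 1
    omega
  have hvC : ∀ i : Fin n, v (2*i.val) = t i.castSucc := by
    intro i
    rw [hv_even, hTeq i.val (le_of_lt i.isLt)]
    exact congrArg t (Fin.ext rfl)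
  have hvS : ∀ i : Fin n, v (2*(i.val+1)) = t i.succ := by
    intro i
    rw [hv_even, hTeq (i.val+1) i.isLt]
    exact congrArg t (Fin.ext rfl)
  have hvc : ∀ i : Fin n, v (2*i.val+1) = c i := by
    intro i
    rw [hv_odd, hCeq i.val i.isLt]
  have hvstep : ∀ k, k < 2*n → v k ≤ v (k+1) := by
    intro k hk
    rcases Nat.even_or_odd k with ⟨m, hm⟩ | ⟨m, hm⟩
    · have hmn : m < n := by omega
      have e1 : v k = t (Fin.castSucc ⟨m, hmn⟩) := by
        rw [show k = 2*m by omega]; exact hvC ⟨m, hmn⟩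
      have e2 : v (k+1) = c ⟨m, hmn⟩ := by
        rw [show k+1 = 2*m+1 by omega]; exact hvc ⟨m, hmn⟩
      rw [e1, e2]
      exact hc1 ⟨m, hmn⟩
    · have hmn : m < n := by omega
      have e1 : v k = c ⟨m, hmn⟩ := by
        rw [show k = 2*m+1 by omega]; exact hvc ⟨m, hmn⟩
      have e2 : v (k+1) = t (Fin.succ ⟨m, hmn⟩) := by
        rw [show k+1 = 2*(m+1) by omega]; exact hvS ⟨m, hmn⟩
      rw [e1, e2]
      exact hc2 ⟨m, hmn⟩
  have hvmono : ∀ j k, j ≤ k → k ≤ 2*n → v j ≤ v k := by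
    intro j k hjk hk
    induction k with
    | zero => rw [Nat.le_zero.mp hjk]
    | succ k ih =>
      rcases Nat.lt_or_ge j (k+1) with hlt | hge
      · exact (ih (by omega) (by omega)).trans (hvstep k (by omega))
      · rw [show j = k+1 by omega]
  have hpw : PiecewiseIn F' h := by
    refine ⟨2*n, fun k => v k.val, ?_, ?_, ?_, ?_⟩
    · intro j k hjk
      exact hvmono j.val k.val hjk (Nat.le_of_lt_succ k.isLt)
    · show v ((0 : Fin (2*n+1)).val) = 0
      rw [Fin.val_zero, show (0:ℕ) = 2*0 from rfl, hv_even, hTeq 0 (Nat.zero_le n), ← ht0]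
      exact congrArg t (Fin.ext (by simp))
    · show v ((Fin.last (2*n)).val) = 1
      rw [Fin.val_last, hv_even, hTeq n le_rfl, ← htlast]
      exact congrArg t (Fin.ext (by simp))
    · intro j
      have hjlt : (j:ℕ) < 2*n := j.isLt
      rcases Nat.even_or_odd j.val with ⟨m, hm⟩ | ⟨m, hm⟩
      · have hmn : m < n := by omega
        refine ⟨φ₁ ⟨m, hmn⟩, hm1 _, ?_⟩
        intro s hs1 hs2
        simp only [Fin.coe_castSucc] at hs1
        simp only [Fin.val_succ] at hs2
        refine hL ⟨m, hmn⟩ s ?_ ?_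
        · rw [← hvC ⟨m, hmn⟩, show 2*(⟨m,hmn⟩ : Fin n).val = j.val by simp; omega]
          exact hs1
        · rw [← hvc ⟨m, hmn⟩, show 2*(⟨m,hmn⟩ : Fin n).val+1 = j.val+1 by simp; omega]
          exact hs2
      · have hmn : m < n := by omega
        refine ⟨φ₂ ⟨m, hmn⟩, hm2 _, ?_⟩
        intro s hs1 hs2
        simp only [Fin.coe_castSucc] at hs1
        simp only [Fin.val_succ] at hs2
        refine hR ⟨m, hmn⟩ s ?_ ?_
        · rw [← hvc ⟨m, hmn⟩, show 2*(⟨m,hmn⟩ : Fin n).val+1 = j.val by simp; omega]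
          exact hs1
        · rw [← hvS ⟨m, hmn⟩, show 2*((⟨m,hmn⟩ : Fin n).val+1) = j.val+1 by simp; omega]
          exact hs2
  have hFcont : ∀ ψ ∈ F', Continuous ψ := by
    rintro ψ (hψ | ⟨w, -, hw⟩)
    · obtain ⟨a, b, hab⟩ := hAff ψ hψ
      have : ψ = fun t => a * t + b := funext hab
      rw [this]
      exact (continuous_const.mul continuous_id).add continuous_const
    · have : ψ = fun _ => w := funext hw
      rw [this]
      exact continuous_const
  exact ⟨pw_continuous hFcont hpw, hanti, hpw⟩
end

section
/- Let F be a finite set of affine functions ℝ → ℝ and let g : [0,1] → ℝ be piecewise in F. Define h : [0,1] → ℝ by h(Δ) = max_{t ∈ [0,Δ]} g(t) (the maximum exists since g is continuous and [0,Δ] is compact). Then h is continuous on [0,1], monotone nondecreasing, and piecewise in F ∪ {constant functions t ↦ v : v is a local maximum value of g relative to [0,1]}. (This is the one-step update Opt_t(Δ) = sup_{0 ≤ Δ' ≤ Δ} Opt_{ℓ'}(Δ') for a Max location in the paper's value iteration on two-clock kernel games.) -/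
section AuxPW

/-- Piecewise-in on a subinterval `[a,b]`. -/
def PW (F : Set (ℝ → ℝ)) (h : Set.Icc (0:ℝ) 1 → ℝ) (a b : ℝ) : Prop :=
  ∃ n : ℕ, ∃ t : Fin (n + 1) → ℝ, Monotone t ∧ t 0 = a ∧ t (Fin.last n) = b ∧
    ∀ i : Fin n, ∃ φ ∈ F, ∀ s : Set.Icc (0:ℝ) 1,
      t i.castSucc ≤ (s : ℝ) → (s : ℝ) ≤ t i.succ → h s = φ (s : ℝ)

theorem PW.single {F : Set (ℝ → ℝ)} {h : Set.Icc (0:ℝ) 1 → ℝ} {a b : ℝ}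
    (hab : a ≤ b) {φ : ℝ → ℝ} (hφ : φ ∈ F)
    (hs : ∀ s : Set.Icc (0:ℝ) 1, a ≤ (s:ℝ) → (s:ℝ) ≤ b → h s = φ (s:ℝ)) :
    PW F h a b := by
  refine ⟨1, ![a, b], ?_, rfl, rfl, ?_⟩
  · intro i j hij
    fin_cases i <;> fin_cases j <;> simp_all
  · intro i
    fin_cases i
    exact ⟨φ, hφ, by simpa using hs⟩

theorem PW.trans {F : Set (ℝ → ℝ)} {h : Set.Icc (0:ℝ) 1 → ℝ} {a b c : ℝ}
    (h1 : PW F h a b) (h2 : PW F h b c) : PW F h a c := by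
  classical
  obtain ⟨n, t, tmono, t0, tl, tp⟩ := h1
  obtain ⟨m, u, umono, u0, ul, up⟩ := h2
  rcases Nat.eq_zero_or_pos n with hn | hn
  · subst hn
    have : a = b := by rw [← t0, ← tl]; rfl
    subst this; exact ⟨m, u, umono, u0, ul, up⟩
  rcases Nat.eq_zero_or_pos m with hm | hm
  · subst hm
    have : b = c := by rw [← u0, ← ul]; rfl
    subst this; exact ⟨n, t, tmono, t0, tl, tp⟩
  have hub : t (Fin.last n) = u 0 := by rw [tl, u0]
  set v : Fin (n + m + 1) → ℝ := fun j => if (j : ℕ) ≤ n then t ⟨min (j : ℕ) n, by omega⟩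
      else u ⟨(j : ℕ) - n, by omega⟩ with hv
  have hv1 : ∀ (j : Fin (n + m + 1)) (hj : (j : ℕ) ≤ n), v j = t ⟨(j : ℕ), by omega⟩ := by
    intro j hj
    simp only [hv, if_pos hj]
    exact congrArg t (Fin.ext (by simp [Nat.min_eq_left hj]))
  have hv2 : ∀ (j : Fin (n + m + 1)) (hj : n ≤ (j : ℕ)), v j = u ⟨(j : ℕ) - n, by omega⟩ := by
    intro j hj
    rcases eq_or_lt_of_le hj with hj' | hj'
    · rw [hv1 j (le_of_eq hj'.symm)]
      have h0 : (⟨(j : ℕ) - n, by omega⟩ : Fin (m + 1)) = 0 := Fin.ext (by simp; omega)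
      rw [h0, ← hub]
      exact congrArg t (Fin.ext (by simp [Fin.last] <;> omega))
    · have hc : ¬ ((j : ℕ) ≤ n) := by omega
      simp only [hv, if_neg hc]
  have vmono : Monotone v := by
    intro j k hjk
    have hjk' : (j : ℕ) ≤ (k : ℕ) := hjk
    by_cases hj : (j : ℕ) ≤ n
    · by_cases hk : (k : ℕ) ≤ n
      · rw [hv1 j hj, hv1 k hk]
        exact tmono (Fin.mk_le_mk.mpr hjk')
      · rw [hv1 j hj, hv2 k (by omega)]
        calc t ⟨(j:ℕ), by omega⟩ ≤ t (Fin.last n) :=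
              tmono (by rw [Fin.le_def]; simp [Fin.last] <;> omega)
          _ = u 0 := hub
          _ ≤ u ⟨(k:ℕ) - n, by omega⟩ := umono (by rw [Fin.le_def]; simp)
    · rw [hv2 j (by omega), hv2 k (by omega)]
      exact umono (Fin.mk_le_mk.mpr (by omega))
  refine ⟨n + m, v, vmono, ?_, ?_, ?_⟩
  · rw [hv1 0 (by simp)]
    rw [← t0]
    exact congrArg t (Fin.ext rfl)
  · rw [hv2 (Fin.last (n + m)) (by simp [Fin.last] <;> omega), ← ul]
    exact congrArg u (Fin.ext (by simp [Fin.last] <;> omega))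
  · intro i
    by_cases hi : (i : ℕ) < n
    · obtain ⟨φ, hφ, hs⟩ := tp ⟨i, hi⟩
      have e1 : v i.castSucc = t (⟨(i:ℕ), hi⟩ : Fin n).castSucc := by
        rw [hv1 _ (by simp; omega)]
        exact congrArg t (Fin.ext (by simp))
      have e2 : v i.succ = t (⟨(i:ℕ), hi⟩ : Fin n).succ := by
        rw [hv1 _ (by simp; omega)]
        exact congrArg t (Fin.ext (by simp))
      exact ⟨φ, hφ, fun s hs1 hs2 => hs s (e1 ▸ hs1) (e2 ▸ hs2)⟩
    · obtain ⟨φ, hφ, hs⟩ := up ⟨(i : ℕ) - n, by omega⟩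
      have e1 : v i.castSucc = u (⟨(i:ℕ) - n, by omega⟩ : Fin m).castSucc := by
        rw [hv2 _ (by simp; omega)]
        exact congrArg u (Fin.ext (by simp))
      have e2 : v i.succ = u (⟨(i:ℕ) - n, by omega⟩ : Fin m).succ := by
        rw [hv2 _ (by simp; omega)]
        exact congrArg u (Fin.ext (by simp; omega))
      exact ⟨φ, hφ, fun s hs1 hs2 => hs s (e1 ▸ hs1) (e2 ▸ hs2)⟩

theorem exists_mem_piece {n : ℕ} (hn : 0 < n) (t : Fin (n + 1) → ℝ) (ht : Monotone t)
    {x : ℝ} (h0 : t 0 ≤ x) (h1 : x ≤ t (Fin.last n)) :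
    ∃ i : Fin n, t i.castSucc ≤ x ∧ x ≤ t i.succ := by
  classical
  set S : Finset (Fin (n + 1)) := Finset.univ.filter (fun j => t j ≤ x) with hS
  have hSne : S.Nonempty := ⟨0, by simp [hS, h0]⟩
  obtain ⟨j, hjmem, hjmax⟩ : ∃ j ∈ S, ∀ k ∈ S, k ≤ j :=
    ⟨S.max' hSne, S.max'_mem hSne, fun k hk => S.le_max' k hk⟩
  have hjx : t j ≤ x := by simpa [hS] using hjmem
  by_cases hjn : (j : ℕ) < n
  · refine ⟨⟨j, hjn⟩, by simpa [Fin.castSucc, Fin.castAdd] using hjx, ?_⟩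
    by_contra hlt
    push_neg at hlt
    have hmem : (⟨(j:ℕ)+1, by omega⟩ : Fin (n+1)) ∈ S := by
      simp only [hS, Finset.mem_filter, Finset.mem_univ, true_and]
      exact le_of_lt (by simpa [Fin.succ] using hlt)
    have := hjmax _ hmem
    rw [Fin.le_def] at this
    simp at this
  · have hjl : j = Fin.last n := Fin.ext (by simp [Fin.last] <;> omega)
    refine ⟨⟨n - 1, by omega⟩, ?_, ?_⟩
    · calc t _ ≤ t (Fin.last n) := ht (by rw [Fin.le_def]; simp [Fin.last] <;> omega)
        _ = t j := by rw [hjl]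
        _ ≤ x := hjx
    · have : (Fin.succ (⟨n - 1, by omega⟩ : Fin n)) = Fin.last n :=
        Fin.ext (by simp [Fin.succ, Fin.last]; omega)
      rw [this]; exact h1

end AuxPW

/-- The running maximum over `[0, Δ]` of a function piecewise in a finite
family of affine functions is continuous, nondecreasing, and piecewise in the
family enlarged by the constants equal to local maximum values. -/
theorem max_left_update
    (F : Set (ℝ → ℝ)) (hF : F.Finite) (hAff : ∀ φ ∈ F, Affine φ)
    (g : Set.Icc (0:ℝ) 1 → ℝ) (hg : PiecewiseIn F g)
    (h : Set.Icc (0:ℝ) 1 → ℝ)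
    (hh : ∀ Δ : Set.Icc (0:ℝ) 1,
      IsGreatest {v : ℝ | ∃ t : Set.Icc (0:ℝ) 1, (t : ℝ) ≤ (Δ : ℝ) ∧ g t = v} (h Δ)) :
    Continuous h ∧ Monotone h ∧
      PiecewiseIn (F ∪ {φ : ℝ → ℝ | ∃ v : ℝ,
        (∃ t₀ : Set.Icc (0:ℝ) 1, IsLocalMax g t₀ ∧ g t₀ = v) ∧
        ∀ t : ℝ, φ t = v}) h := by
  classical
  set F' : Set (ℝ → ℝ) := F ∪ {φ : ℝ → ℝ | ∃ v : ℝ,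
      (∃ t₀ : Set.Icc (0:ℝ) 1, IsLocalMax g t₀ ∧ g t₀ = v) ∧ ∀ t : ℝ, φ t = v} with hF'def
  -- basic facts
  have hub : ∀ (Δ s : Set.Icc (0:ℝ) 1), (s:ℝ) ≤ (Δ:ℝ) → g s ≤ h Δ :=
    fun Δ s hs => (hh Δ).2 ⟨s, hs, rfl⟩
  have hself : ∀ Δ : Set.Icc (0:ℝ) 1, g Δ ≤ h Δ := fun Δ => hub Δ Δ le_rfl
  have mono : Monotone h := by
    intro Δ Δ' hΔ
    obtain ⟨u, hu, hgu⟩ := (hh Δ).1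
    exact (hh Δ').2 ⟨u, hu.trans hΔ, hgu⟩
  -- constants at local maxima belong to F'
  have constmem : ∀ (c : ℝ) (u : Set.Icc (0:ℝ) 1), (u:ℝ) < c →
      (∀ s : Set.Icc (0:ℝ) 1, (s:ℝ) ≤ c → g s ≤ g u) → (fun _ : ℝ => g u) ∈ F' := by
    intro c u huc hc
    refine Set.mem_union_right _ ⟨g u, ⟨u, ?_, rfl⟩, fun _ => rfl⟩
    have hopen : IsOpen {s : Set.Icc (0:ℝ) 1 | (s:ℝ) < c} :=
      isOpen_lt continuous_subtype_val continuous_const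
    exact Filter.eventually_of_mem (hopen.mem_nhds huc) (fun s hs => hc s (le_of_lt hs))
  -- at every point, h agrees with some member of F'
  have point_rep : ∀ Δ : Set.Icc (0:ℝ) 1, ∃ φ' ∈ F', φ' (Δ:ℝ) = h Δ := by
    intro Δ
    by_cases hc : h Δ = g Δ
    · obtain ⟨n, t, tmono, t0, tl, tp⟩ := hg
      have hn : 0 < n := by
        rcases Nat.eq_zero_or_pos n with h0 | h0
        · exfalso; subst h0
          have : t 0 = t (Fin.last 0) := rfl
          rw [t0, tl] at this; norm_num at this
        · exact h0
      obtain ⟨i, hi1, hi2⟩ := exists_mem_piece (x := (Δ:ℝ)) hn t tmono (by rw [t0]; exact Δ.2.1) (by rw [tl]; exact Δ.2.2)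
      obtain ⟨φ, hφ, hs⟩ := tp i
      exact ⟨φ, Set.mem_union_left _ hφ, by rw [← hs Δ hi1 hi2, hc]⟩
    · obtain ⟨u, huΔ, hgu⟩ := (hh Δ).1
      have hlt : (u:ℝ) < (Δ:ℝ) := by
        rcases lt_or_eq_of_le huΔ with hl | he
        · exact hl
        · exfalso
          apply hc
          rw [← hgu]
          congr 1
          exact Subtype.ext he
      refine ⟨fun _ : ℝ => g u, constmem (Δ:ℝ) u hlt ?_, hgu⟩
      intro s hs
      rw [hgu]
      exact hub Δ s hs
  -- affine functions achieve max at endpoints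
  have affine_bound : ∀ (a b p q s : ℝ), p ≤ s → s ≤ q →
      a*s+b ≤ max (a*p+b) (a*q+b) := by
    intro a b p q s hp hq
    rcases le_total 0 a with ha | ha
    · exact le_max_of_le_right (by nlinarith)
    · exact le_max_of_le_left (by nlinarith)
  -- one-step construction
  have step : ∀ (p q : ℝ), 0 ≤ p → p ≤ q → q ≤ 1 → ∀ φ : ℝ → ℝ, φ ∈ F →
      (∀ s : Set.Icc (0:ℝ) 1, p ≤ (s:ℝ) → (s:ℝ) ≤ q → g s = φ (s:ℝ)) →
      PW F' h p q := by
    intro p q hp0 hpq hq1 φ hφ hgφ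
    obtain ⟨A, B, hAB⟩ := hAff φ hφ
    set pI : Set.Icc (0:ℝ) 1 := ⟨p, hp0, hpq.trans hq1⟩ with hpI
    set k := h pI with hk
    have hgp : g pI = φ p := hgφ pI le_rfl hpq
    have hφp : φ p ≤ k := by rw [← hgp]; exact hself pI
    have claimA : ∀ s : Set.Icc (0:ℝ) 1, p ≤ (s:ℝ) → (s:ℝ) ≤ q →
        h s = max k (φ (s:ℝ)) := by
      intro s hps hsq
      apply le_antisymm
      · obtain ⟨u, hus, hgu⟩ := (hh s).1
        rw [← hgu]
        by_cases hup : (u:ℝ) ≤ p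
        · exact le_max_of_le_left (hub pI u hup)
        · push_neg at hup
          rw [hgφ u (le_of_lt hup) (hus.trans hsq)]
          calc φ (u:ℝ) ≤ max (φ p) (φ (s:ℝ)) := by
                rw [hAB, hAB, hAB]; exact affine_bound A B p (s:ℝ) (u:ℝ) hup.le hus
            _ ≤ max k (φ (s:ℝ)) := max_le_max hφp le_rfl
      · apply max_le
        · exact mono (show pI ≤ s from hps)
        · rw [← hgφ s hps hsq]; exact hself s
    by_cases hcase : φ q ≤ k
    · -- h is constantly k on [p,q]
      have hφle : ∀ s : ℝ, p ≤ s → s ≤ q → φ s ≤ k := by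
        intro s h1 h2
        rw [hAB]
        refine le_trans (affine_bound A B p q s h1 h2) (max_le ?_ ?_)
        · rw [← hAB]; exact hφp
        · rw [← hAB]; exact hcase
      have hconst : ∀ s : Set.Icc (0:ℝ) 1, p ≤ (s:ℝ) → (s:ℝ) ≤ q → h s = k := by
        intro s h1 h2
        rw [claimA s h1 h2, max_eq_left (hφle (s:ℝ) h1 h2)]
      rcases eq_or_lt_of_le hpq with he | hlt
      · obtain ⟨φ', hφ', hval⟩ := point_rep pI
        refine PW.single hpq hφ' ?_
        intro s h1 h2
        have hs : s = pI := Subtype.ext (le_antisymm (by show (s:ℝ) ≤ p; rw [he]; exact h2) h1)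
        rw [hs, hval]
      · obtain ⟨u, hup, hgu⟩ := (hh pI).1
        have humem : (fun _ : ℝ => g u) ∈ F' := by
          refine constmem q u (lt_of_le_of_lt hup hlt) ?_
          intro s hs
          rw [hgu]
          by_cases hsp : (s:ℝ) ≤ p
          · exact hub pI s hsp
          · push_neg at hsp
            rw [hgφ s hsp.le hs]
            exact hφle (s:ℝ) hsp.le hs
        refine PW.single hpq humem ?_
        intro s h1 h2
        rw [hconst s h1 h2, hgu]
    · push_neg at hcase
      rw [hAB] at hφp hcase
      have hApos : 0 < A := by nlinarith
      have hplt : p < q := by nlinarith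
      set c := (k - B)/A with hc
      have hφc : A*c + B = k := by rw [hc]; field_simp; ring
      have hpc : p ≤ c := by nlinarith
      have hcq : c < q := by nlinarith
      have hc1 : c ≤ 1 := hcq.le.trans hq1
      have hconst : ∀ s : Set.Icc (0:ℝ) 1, p ≤ (s:ℝ) → (s:ℝ) ≤ c → h s = k := by
        intro s h1 h2
        rw [claimA s h1 (h2.trans hcq.le), max_eq_left (by rw [hAB]; nlinarith)]
      have pw1 : PW F' h p c := by
        rcases eq_or_lt_of_le hpc with he | hlt
        · obtain ⟨φ', hφ', hval⟩ := point_rep pI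
          refine PW.single hpc hφ' ?_
          intro s h1 h2
          have hs : s = pI := Subtype.ext (le_antisymm (by show (s:ℝ) ≤ p; rw [he]; exact h2) h1)
          rw [hs, hval]
        · obtain ⟨u, hup, hgu⟩ := (hh pI).1
          have humem : (fun _ : ℝ => g u) ∈ F' := by
            refine constmem c u (lt_of_le_of_lt hup hlt) ?_
            intro s hs
            rw [hgu]
            by_cases hsp : (s:ℝ) ≤ p
            · exact hub pI s hsp
            · push_neg at hsp
              rw [hgφ s hsp.le (hs.trans hcq.le), hAB]
              nlinarith
          refine PW.single hpc humem ?_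
          intro s h1 h2
          rw [hconst s h1 h2, hgu]
      have pw2 : PW F' h c q := by
        refine PW.single hcq.le (Set.mem_union_left _ hφ) ?_
        intro s h1 h2
        rw [claimA s (hpc.trans h1) h2, max_eq_right (by rw [hAB]; nlinarith)]
      exact pw1.trans pw2
  -- assemble the full piecewise structure by induction along the pieces of g
  have hpw : PiecewiseIn F' h := by
    obtain ⟨n, t, tmono, t0, tl, tp⟩ := hg
    have ht01 : ∀ j : Fin (n+1), 0 ≤ t j ∧ t j ≤ 1 := by
      intro j
      constructor
      · rw [← t0]; exact tmono (Fin.zero_le j)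
      · rw [← tl]; exact tmono (Fin.le_last j)
    have key : ∀ i : ℕ, ∀ hi : i ≤ n, PW F' h 0 (t ⟨i, Nat.lt_succ_of_le hi⟩) := by
      intro i
      induction i with
      | zero =>
        intro hi
        have h0 : t ⟨0, Nat.lt_succ_of_le hi⟩ = 0 := by
          rw [← t0]; exact congrArg t (Fin.ext rfl)
        rw [h0]
        obtain ⟨φ', hφ', hval⟩ := point_rep ⟨0, le_rfl, by norm_num⟩
        refine PW.single le_rfl hφ' ?_
        intro s h1 h2
        have hs : s = ⟨0, le_rfl, by norm_num⟩ := Subtype.ext (le_antisymm h2 s.2.1)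
        rw [hs, hval]
      | succ i ih =>
        intro hi
        have hi' : i < n := hi
        obtain ⟨φ, hφ, hs⟩ := tp ⟨i, hi'⟩
        have e1 : t (⟨i, hi'⟩ : Fin n).castSucc = t ⟨i, Nat.lt_succ_of_le hi'.le⟩ :=
          congrArg t (Fin.ext rfl)
        have e2 : t (⟨i, hi'⟩ : Fin n).succ = t ⟨i+1, Nat.lt_succ_of_le hi⟩ :=
          congrArg t (Fin.ext rfl)
        have hstep : PW F' h (t ⟨i, Nat.lt_succ_of_le hi'.le⟩) (t ⟨i+1, Nat.lt_succ_of_le hi⟩) := by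
          refine step _ _ (ht01 _).1 ?_ (ht01 _).2 φ hφ ?_
          · rw [← e1, ← e2]; exact tmono (Fin.castSucc_le_succ _)
          · intro s hs1 hs2
            exact hs s (by rw [e1]; exact hs1) (by rw [e2]; exact hs2)
        exact (ih hi'.le).trans hstep
    have := key n le_rfl
    have hlast : t ⟨n, Nat.lt_succ_of_le le_rfl⟩ = 1 := by
      rw [← tl]; exact congrArg t (Fin.ext rfl)
    rw [hlast] at this
    exact this
  -- continuity from the piecewise structure
  have cont : Continuous h := by
    obtain ⟨n, t, tmono, t0, tl, tp⟩ := hpw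
    have hn : 0 < n := by
      rcases Nat.eq_zero_or_pos n with h0 | h0
      · exfalso; subst h0
        have : t 0 = t (Fin.last 0) := rfl
        rw [t0, tl] at this; norm_num at this
      · exact h0
    choose φf hφfF hφf using tp
    have hcont : ∀ i : Fin n, Continuous (φf i) := by
      intro i
      rcases hφfF i with hmem | hmem
      · obtain ⟨a, b, hab⟩ := hAff _ hmem
        have : φf i = fun t => a * t + b := funext hab
        rw [this]; fun_prop
      · obtain ⟨v, _, hv⟩ := hmem
        have : φf i = fun _ => v := funext hv
        rw [this]; exact continuous_const
    apply LocallyFinite.continuous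
      (f := fun i : Fin n => {s : Set.Icc (0:ℝ) 1 | t i.castSucc ≤ (s:ℝ) ∧ (s:ℝ) ≤ t i.succ})
    · exact locallyFinite_of_finite _
    · ext s
      simp only [Set.mem_iUnion, Set.mem_univ, iff_true, Set.mem_setOf_eq]
      exact exists_mem_piece hn t tmono (by rw [t0]; exact s.2.1) (by rw [tl]; exact s.2.2)
    · intro i
      exact IsClosed.inter (isClosed_le continuous_const continuous_subtype_val)
        (isClosed_le continuous_subtype_val continuous_const)
    · intro i
      apply ContinuousOn.congr (((hcont i).comp continuous_subtype_val).continuousOn)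
      intro s hs
      exact hφf i s hs.1 hs.2
  exact ⟨cont, mono, hpw⟩
end

section
/- Let X be a nonempty finite set, let ε > 0, and let ν, ν' : X → ℝ be ε-neighbours. Fix a clock x ∈ X and a constant c ∈ ℝ, and set δ = c − ν(x) and δ' = c − ν'(x). Then ν + δ and ν' + δ' are ε-neighbours. (With c = 1, this is the guard 'x = 1' case of the paper's bisimulation proof: delaying each of two ε-neighbouring valuations exactly until the same clock reaches 1 preserves ε-neighbourhood.) -/
/-- Two valuations `ν, ν' : X → ℝ` are `ε`-neighbours if there exist
`ε₁, ε₂ ≥ 0` with `ε₁ + ε₂ < ε` such that `-ε₁ ≤ ν z - ν' z ≤ ε₂` for all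
clocks `z`. -/
def EpsNbr {X : Type*} (ε : ℝ) (ν ν' : X → ℝ) : Prop :=
  ∃ ε₁ ε₂ : ℝ, 0 ≤ ε₁ ∧ 0 ≤ ε₂ ∧ ε₁ + ε₂ < ε ∧
    ∀ z : X, -ε₁ ≤ ν z - ν' z ∧ ν z - ν' z ≤ ε₂

/-- Delaying two `ε`-neighbouring valuations exactly until a common clock `x`
reaches the same constant `c` preserves `ε`-neighbourhood. -/
theorem epsNbr_delay_to_guard
    {X : Type*} [Finite X] [Nonempty X] (ε : ℝ) (hε : 0 < ε)
    (ν ν' : X → ℝ) (h : EpsNbr ε ν ν') (x : X) (c : ℝ)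
    (δ δ' : ℝ) (hδ : δ = c - ν x) (hδ' : δ' = c - ν' x) :
    EpsNbr ε (fun z => ν z + δ) (fun z => ν' z + δ') := by
  obtain ⟨ε₁, ε₂, h₁, h₂, hsum, hz⟩ := h
  refine ⟨ε₁ + (ν x - ν' x), ε₂ - (ν x - ν' x), ?_, ?_, by linarith, fun z => ?_⟩
  · have := (hz x).1; linarith
  · have := (hz x).2; linarith
  · have := hz z; constructor <;> simp only [hδ, hδ'] <;> linarith [this.1, this.2]
end
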